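/- arXiv:2601.05460 — 7 statements merged into one kernel-verified Lean document; each statement's English description precedes it below -/
import Mathlib

section
/- (Completion of squares / Lemma 1) Let H, U be real Hilbert spaces, N ∈ ℕ, and for each k ∈ {0,…,N} let A(k), C(k) ∈ L(H), B(k), D(k) ∈ L(U,H), M(k), S ∈ L(H) self-adjoint, L(k) ∈ L(H,U), R(k) ∈ L(U) self-adjoint. Suppose P(0),…,P(N+1) are self-adjoint operators on H satisfying P(N+1) = S and the backward Riccati recursion P(k) = A(k)*P(k+1)A(k) + C(k)*P(k+1)C(k) + M(k) − 𝒢(k)*ℛ(k)⁻¹𝒢(k), where ℛ(k) = R(k) + B(k)*P(k+1)B(k) + D(k)*P(k+1)D(k) is boundedly invertible and 𝒢(k) = L(k) + B(k)*P(k+1)A(k) + D(k)*P(k+1)C(k). Then for any deterministic x₀ ∈ H and any adapted square-integrable control u = (u(0),…,u(N)), the trajectory x(k+1) = A(k)x(k) + B(k)u(k) + (C(k)x(k) + D(k)u(k))ω(k), x(0)=x₀, where ω(0),…,ω(N) are independent real random variables with mean 0 and variance 1 (ω(k) independent of ℱ_k), satisfies J(x₀,u) = ⟨P(0)x₀, x₀⟩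 + E[ Σ_{k=0}^N ⟨ℛ(k)(u(k) + ℛ(k)⁻¹𝒢(k)x(k)), u(k) + ℛ(k)⁻¹𝒢(k)x(k)⟩ ], where J(x₀,u) = E[ Σ_{k=0}^N ( ⟨M(k)x(k),x(k)⟩ + 2⟨L(k)x(k),u(k)⟩ + ⟨R(k)u(k),u(k)⟩ ) + ⟨S x(N+1), x(N+1)⟩ ]. -/
open scoped RealInnerProductSpace
open ContinuousLinearMap MeasureTheory

lemma int_inner_aux {E : Type*} [NormedAddCommGroup E] [InnerProductSpace ℝ E]
    {Ω : Type*} [MeasurableSpace Ω] {μ : Measure Ω} {f g : Ω → E}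
    (hf : MemLp f 2 μ) (hg : MemLp g 2 μ) :
    Integrable (fun a => ⟪f a, g a⟫) μ := by
  have h := L2.integrable_inner (𝕜 := ℝ) (hf.toLp f) (hg.toLp g)
  refine h.congr ?_
  filter_upwards [hf.coeFn_toLp, hg.coeFn_toLp] with a h1 h2
  rw [h1, h2]

lemma cos_aux {H U : Type*}
    [NormedAddCommGroup H] [InnerProductSpace ℝ H] [CompleteSpace H]
    [NormedAddCommGroup U] [InnerProductSpace ℝ U] [CompleteSpace U]
    (P' Pk : H →L[ℝ] H) (hP' : IsSelfAdjoint P')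
    (A C : H →L[ℝ] H) (B D : U →L[ℝ] H) (Mk : H →L[ℝ] H) (Lk : H →L[ℝ] U)
    (Rk Rc Ri : U →L[ℝ] U) (Gk : H →L[ℝ] U) (hRksa : IsSelfAdjoint Rk)
    (hRc : Rc = Rk + adjoint B ∘L P' ∘L B + adjoint D ∘L P' ∘L D)
    (hGk : Gk = Lk + adjoint B ∘L P' ∘L A + adjoint D ∘L P' ∘L C)
    (h1 : Rc ∘L Ri = ContinuousLinearMap.id ℝ U)
    (hP : Pk = adjoint A ∘L P' ∘L A + adjoint C ∘L P' ∘L C + Mk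
        - adjoint Gk ∘L Ri ∘L Gk)
    (xv : H) (uv : U) :
    ⟪Mk xv, xv⟫ + 2 * ⟪Lk xv, uv⟫ + ⟪Rk uv, uv⟫
      + ⟪P' (A xv + B uv), A xv + B uv⟫ + ⟪P' (C xv + D uv), C xv + D uv⟫
    = ⟪Pk xv, xv⟫ + ⟪Rc (uv + Ri (Gk xv)), uv + Ri (Gk xv)⟫ := by
  have hRcsa : IsSelfAdjoint Rc := by
    rw [hRc]
    exact (hRksa.add (hP'.adjoint_conj B)).add (hP'.adjoint_conj D)
  have hadjRc : adjoint Rc = Rc := hRcsa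
  have hadjP' : adjoint P' = P' := hP'
  have hRcRi : ∀ y : U, Rc (Ri y) = y := by
    intro y
    have := congrArg (fun T => T y) h1
    simpa using this
  set g : U := Gk xv with hg
  set v' : U := Ri g with hv'
  have hRHS2 : ⟪Rc (uv + v'), uv + v'⟫
      = ⟪Rc uv, uv⟫ + 2 * ⟪g, uv⟫ + ⟪g, v'⟫ := by
    have e1 : ⟪Rc uv, v'⟫ = ⟪g, uv⟫ := by
      rw [← hadjRc, adjoint_inner_left, hRcRi, real_inner_comm]
    have e2 : ⟪Rc v', uv⟫ = ⟪g, uv⟫ := by rw [hRcRi]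
    have e3 : ⟪Rc v', v'⟫ = ⟪g, v'⟫ := by rw [hRcRi]
    rw [map_add, inner_add_left, inner_add_right, inner_add_right, e1, e2, e3]
    ring
  have hPk : ⟪Pk xv, xv⟫ = ⟪P' (A xv), A xv⟫ + ⟪P' (C xv), C xv⟫
      + ⟪Mk xv, xv⟫ - ⟪g, v'⟫ := by
    rw [hP]
    simp only [ContinuousLinearMap.add_apply, ContinuousLinearMap.sub_apply,
      ContinuousLinearMap.comp_apply, inner_add_left, inner_sub_left,
      adjoint_inner_left]
    rw [show ⟪Ri (Gk xv), Gk xv⟫ = ⟪g, v'⟫ by rw [← hg, ← hv', real_inner_comm]]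
  have hRcu : ⟪Rc uv, uv⟫ = ⟪Rk uv, uv⟫ + ⟪P' (B uv), B uv⟫ + ⟪P' (D uv), D uv⟫ := by
    rw [hRc]
    simp only [ContinuousLinearMap.add_apply, ContinuousLinearMap.comp_apply,
      inner_add_left, adjoint_inner_left]
  have hgu : ⟪g, uv⟫ = ⟪Lk xv, uv⟫ + ⟪P' (A xv), B uv⟫ + ⟪P' (C xv), D uv⟫ := by
    rw [hg, hGk]
    simp only [ContinuousLinearMap.add_apply, ContinuousLinearMap.comp_apply,
      inner_add_left, adjoint_inner_left]
  have hcross : ∀ (a : H) (b : H), ⟪P' b, a⟫ = ⟪P' a, b⟫ := by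
    intro a b
    rw [← hadjP', adjoint_inner_left, real_inner_comm, hadjP']
  have hq1 : ⟪P' (A xv + B uv), A xv + B uv⟫
      = ⟪P' (A xv), A xv⟫ + 2 * ⟪P' (A xv), B uv⟫ + ⟪P' (B uv), B uv⟫ := by
    rw [map_add, inner_add_left, inner_add_right, inner_add_right,
      hcross (B uv) (A xv)]
    ring
  have hq2 : ⟪P' (C xv + D uv), C xv + D uv⟫
      = ⟪P' (C xv), C xv⟫ + 2 * ⟪P' (C xv), D uv⟫ + ⟪P' (D uv), D uv⟫ := by
    rw [map_add, inner_add_left, inner_add_right, inner_add_right,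
      hcross (D uv) (C xv)]
    ring
  rw [hRHS2, hPk, hRcu, hgu, hq1, hq2]
  ring

/-- Completion of squares (Lemma 1): if `{P(k)}` solves the backward Riccati operator
equation with `ℛ(k) = R(k) + B(k)*P(k+1)B(k) + D(k)*P(k+1)D(k)` boundedly invertible
(inverse `Rinv k`) and `𝒢(k) = L(k) + B(k)*P(k+1)A(k) + D(k)*P(k+1)C(k)`, then for any
deterministic `x₀` and adapted square-integrable control `u`, the trajectory of
`x(k+1) = A(k)x(k) + B(k)u(k) + (C(k)x(k) + D(k)u(k))ω(k)` satisfies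
`J(x₀,u) = ⟪P(0)x₀,x₀⟫ + E[Σ_k ⟪ℛ(k)(u(k)+ℛ(k)⁻¹𝒢(k)x(k)), u(k)+ℛ(k)⁻¹𝒢(k)x(k)⟫]`. -/
theorem stmt_5 {H U : Type*}
    [NormedAddCommGroup H] [InnerProductSpace ℝ H] [CompleteSpace H]
    [NormedAddCommGroup U] [InnerProductSpace ℝ U] [CompleteSpace U]
    {Ω : Type*} [MeasurableSpace Ω] (μ : Measure Ω) [IsProbabilityMeasure μ]
    (N : ℕ)
    (A C : ℕ → H →L[ℝ] H) (B D : ℕ → U →L[ℝ] H)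
    (M : ℕ → H →L[ℝ] H) (hM : ∀ k, IsSelfAdjoint (M k))
    (S : H →L[ℝ] H) (hSsa : IsSelfAdjoint S)
    (L : ℕ → H →L[ℝ] U)
    (R : ℕ → U →L[ℝ] U) (hRsa : ∀ k, IsSelfAdjoint (R k))
    (P : ℕ → H →L[ℝ] H) (hPsa : ∀ k, IsSelfAdjoint (P k)) (hPN : P (N + 1) = S)
    (Rcal : ℕ → U →L[ℝ] U) (G : ℕ → H →L[ℝ] U) (Rinv : ℕ → U →L[ℝ] U)
    (hRcal : ∀ k, Rcal k = R k + adjoint (B k) ∘L P (k+1) ∘L B k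
        + adjoint (D k) ∘L P (k+1) ∘L D k)
    (hG : ∀ k, G k = L k + adjoint (B k) ∘L P (k+1) ∘L A k
        + adjoint (D k) ∘L P (k+1) ∘L C k)
    (hinv1 : ∀ k ≤ N, Rcal k ∘L Rinv k = ContinuousLinearMap.id ℝ U)
    (hinv2 : ∀ k ≤ N, Rinv k ∘L Rcal k = ContinuousLinearMap.id ℝ U)
    (hRic : ∀ k ≤ N, P k = adjoint (A k) ∘L P (k+1) ∘L A k
        + adjoint (C k) ∘L P (k+1) ∘L C k + M k
        - adjoint (G k) ∘L Rinv k ∘L G k)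
    (ω : ℕ → Ω → ℝ) (hωmeas : ∀ k, Measurable (ω k))
    (hωL2 : ∀ k, MemLp (ω k) 2 μ)
    (hmean : ∀ k, ∫ a, ω k a ∂μ = 0) (hvar : ∀ k, ∫ a, (ω k a) ^ 2 ∂μ = 1)
    (F : ℕ → MeasurableSpace Ω)
    (hF : ∀ k, F k = ⨆ i ∈ Finset.range k, MeasurableSpace.comap (ω i) inferInstance)
    (hindep : ∀ k, ProbabilityTheory.Indep
      (MeasurableSpace.comap (ω k) inferInstance) (F k) μ)
    (x₀ : H) (u : ℕ → Ω → U)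
    (humeas : ∀ k, StronglyMeasurable[F k] (u k))
    (huL2 : ∀ k, MemLp (u k) 2 μ)
    (x : ℕ → Ω → H) (hx0 : x 0 = fun _ => x₀)
    (hxrec : ∀ k ≤ N, ∀ a : Ω, x (k + 1) a =
        A k (x k a) + B k (u k a) + ω k a • (C k (x k a) + D k (u k a))) :
    ∫ a, ((∑ k ∈ Finset.range (N + 1),
          (⟪M k (x k a), x k a⟫ + 2 * ⟪L k (x k a), u k a⟫ + ⟪R k (u k a), u k a⟫))
        + ⟪S (x (N + 1) a), x (N + 1) a⟫) ∂μ
      = ⟪P 0 x₀, x₀⟫ + ∫ a, ∑ k ∈ Finset.range (N + 1),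
          ⟪Rcal k (u k a + Rinv k (G k (x k a))),
            u k a + Rinv k (G k (x k a))⟫ ∂μ := by
  classical
  have hFmono : ∀ {j k : ℕ}, j ≤ k → F j ≤ F k := by
    intro j k hjk
    rw [hF j, hF k]
    refine iSup_le fun i => iSup_le fun hi => ?_
    exact le_iSup₂ (f := fun i (_ : i ∈ Finset.range k) =>
        MeasurableSpace.comap (ω i) inferInstance) i
      (Finset.mem_range.2 (lt_of_lt_of_le (Finset.mem_range.1 hi) hjk))
  have hωFk : ∀ k, Measurable[F (k+1)] (ω k) := by
    intro k
    refine Measurable.of_comap_le ?_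
    rw [hF (k+1)]
    exact le_iSup₂ (f := fun i (_ : i ∈ Finset.range (k+1)) =>
        MeasurableSpace.comap (ω i) inferInstance) k
      (Finset.mem_range.2 (Nat.lt_succ_self k))
  have hIndepF : ∀ k (f : Ω → ℝ), StronglyMeasurable[F k] f →
      ProbabilityTheory.IndepFun (ω k) f μ := by
    intro k f hf
    rw [ProbabilityTheory.IndepFun_iff_Indep]
    exact ProbabilityTheory.indep_of_indep_of_le_right (hindep k)
      (hf.measurable.comap_le)
  -- measurability and square-integrability of the trajectory
  have hxP : ∀ k, k ≤ N + 1 → StronglyMeasurable[F k] (x k) ∧ MemLp (x k) 2 μ := by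
    intro k
    induction k with
    | zero =>
      intro _
      rw [hx0]
      exact ⟨stronglyMeasurable_const, memLp_const x₀⟩
    | succ k ih =>
      intro hk1
      have hk : k ≤ N := Nat.lt_succ_iff.mp hk1
      obtain ⟨hxSM, hxL2⟩ := ih (le_trans (Nat.le_succ k) hk1)
      have hwSM : StronglyMeasurable[F k] (fun a => C k (x k a) + D k (u k a)) :=
        ((C k).continuous.comp_stronglyMeasurable hxSM).add
          ((D k).continuous.comp_stronglyMeasurable (humeas k))
      have hwL2 : MemLp (fun a => C k (x k a) + D k (u k a)) 2 μ :=
        ((C k).comp_memLp' hxL2).add ((D k).comp_memLp' (huL2 k))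
      have hwAESM : AEStronglyMeasurable (fun a => C k (x k a) + D k (u k a)) μ :=
        hwL2.aestronglyMeasurable
      have hxr : x (k+1) = fun a =>
          A k (x k a) + B k (u k a) + ω k a • (C k (x k a) + D k (u k a)) :=
        funext (hxrec k hk)
      have hsmul : MemLp (fun a => ω k a • (C k (x k a) + D k (u k a))) 2 μ := by
        have hind : ProbabilityTheory.IndepFun
            (fun a => (ω k a)^2) (fun a => ‖C k (x k a) + D k (u k a)‖^2) μ :=
          (hIndepF k _ hwSM.norm).comp (measurable_id.pow_const 2)
            (measurable_id.pow_const 2)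
        have hint : Integrable
            (fun a => (ω k a)^2 * ‖C k (x k a) + D k (u k a)‖^2) μ :=
          hind.integrable_mul (hωL2 k).integrable_sq
            ((memLp_two_iff_integrable_sq_norm hwAESM).1 hwL2)
        refine (memLp_two_iff_integrable_sq_norm
          ((hωmeas k).aestronglyMeasurable.smul hwAESM)).2 ?_
        refine hint.congr (Filter.Eventually.of_forall fun a => ?_)
        simp only [Pi.smul_apply', norm_smul, mul_pow, Real.norm_eq_abs, sq_abs]
      constructor
      · rw [hxr]
        exact (((A k).continuous.comp_stronglyMeasurable
            (hxSM.mono (hFmono (Nat.le_succ k)))).add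
          ((B k).continuous.comp_stronglyMeasurable
            ((humeas k).mono (hFmono (Nat.le_succ k))))).add
          (((hωFk k).stronglyMeasurable).smul (hwSM.mono (hFmono (Nat.le_succ k))))
      · rw [hxr]
        exact (((A k).comp_memLp' hxL2).add ((B k).comp_memLp' (huL2 k))).add hsmul
  -- per-step identity of integrals
  have key : ∀ k, k ≤ N →
      ∫ a, (⟪M k (x k a), x k a⟫ + 2 * ⟪L k (x k a), u k a⟫
          + ⟪R k (u k a), u k a⟫) ∂μ
      = (∫ a, ⟪P k (x k a), x k a⟫ ∂μ)
        - (∫ a, ⟪P (k+1) (x (k+1) a), x (k+1) a⟫ ∂μ)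
        + ∫ a, ⟪Rcal k (u k a + Rinv k (G k (x k a))),
            u k a + Rinv k (G k (x k a))⟫ ∂μ := by
    intro k hk
    obtain ⟨hxSM, hxL2⟩ := hxP k (by omega)
    set P' := P (k+1) with hP'def
    set v : Ω → H := fun a => A k (x k a) + B k (u k a) with hv
    set w : Ω → H := fun a => C k (x k a) + D k (u k a) with hw
    have hvSM : StronglyMeasurable[F k] v :=
      ((A k).continuous.comp_stronglyMeasurable hxSM).add
        ((B k).continuous.comp_stronglyMeasurable (humeas k))
    have hwSM : StronglyMeasurable[F k] w :=
      ((C k).continuous.comp_stronglyMeasurable hxSM).add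
        ((D k).continuous.comp_stronglyMeasurable (humeas k))
    have hvL2 : MemLp v 2 μ := ((A k).comp_memLp' hxL2).add ((B k).comp_memLp' (huL2 k))
    have hwL2 : MemLp w 2 μ := ((C k).comp_memLp' hxL2).add ((D k).comp_memLp' (huL2 k))
    have hxr : x (k+1) = fun a => v a + ω k a • w a := funext (hxrec k hk)
    set q : Ω → ℝ := fun a => ⟪P' (v a), v a⟫ with hqdef
    set r : Ω → ℝ := fun a => ⟪P' (v a), w a⟫ + ⟪P' (w a), v a⟫ with hrdef
    set s : Ω → ℝ := fun a => ⟪P' (w a), w a⟫ with hsdef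
    have hq : Integrable q μ := int_inner_aux (P'.comp_memLp' hvL2) hvL2
    have hs : Integrable s μ := int_inner_aux (P'.comp_memLp' hwL2) hwL2
    have hr : Integrable r μ :=
      (int_inner_aux (P'.comp_memLp' hvL2) hwL2).add
        (int_inner_aux (P'.comp_memLp' hwL2) hvL2)
    have hrSM : StronglyMeasurable[F k] r :=
      ((P'.continuous.comp_stronglyMeasurable hvSM).inner hwSM).add
        ((P'.continuous.comp_stronglyMeasurable hwSM).inner hvSM)
    have hsSM : StronglyMeasurable[F k] s :=
      (P'.continuous.comp_stronglyMeasurable hwSM).inner hwSM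
    have hωr : Integrable (fun a => ω k a * r a) μ :=
      (hIndepF k r hrSM).integrable_mul ((hωL2 k).integrable one_le_two) hr
    have hind2 : ProbabilityTheory.IndepFun (fun a => (ω k a)^2) s μ :=
      (hIndepF k s hsSM).comp (measurable_id.pow_const 2) measurable_id
    have hω2s : Integrable (fun a => (ω k a)^2 * s a) μ :=
      hind2.integrable_mul (hωL2 k).integrable_sq hs
    have hexp : ∫ a, ⟪P' (x (k+1) a), x (k+1) a⟫ ∂μ
        = (∫ a, q a ∂μ) + ∫ a, s a ∂μ := by
      have hpt : ∀ a, ⟪P' (x (k+1) a), x (k+1) a⟫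
          = q a + ω k a * r a + (ω k a)^2 * s a := by
        intro a
        rw [hxr]
        simp only [hqdef, hrdef, hsdef, map_add, ContinuousLinearMap.map_smul,
          inner_add_left, inner_add_right, real_inner_smul_left,
          real_inner_smul_right]
        ring
      rw [integral_congr_ae (Filter.Eventually.of_forall hpt)]
      have h1 : ∫ a, (q a + ω k a * r a + (ω k a)^2 * s a) ∂μ
          = (∫ a, (q a + ω k a * r a) ∂μ) + ∫ a, (ω k a)^2 * s a ∂μ :=
        integral_add (hq.add hωr) hω2s
      have h2 : ∫ a, (q a + ω k a * r a) ∂μ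
          = (∫ a, q a ∂μ) + ∫ a, ω k a * r a ∂μ := integral_add hq hωr
      rw [h1, h2]
      have e1 : ∫ a, ω k a * r a ∂μ = (∫ a, ω k a ∂μ) * ∫ a, r a ∂μ :=
        (hIndepF k r hrSM).integral_fun_mul_eq_mul_integral
          ((hωL2 k).integrable one_le_two).aestronglyMeasurable hr.aestronglyMeasurable
      have e2 : ∫ a, (ω k a)^2 * s a ∂μ = (∫ a, (ω k a)^2 ∂μ) * ∫ a, s a ∂μ :=
        hind2.integral_fun_mul_eq_mul_integral (hωL2 k).integrable_sq.aestronglyMeasurable hs.aestronglyMeasurable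
      rw [e1, e2, hmean k, hvar k]
      ring
    set z : Ω → U := fun a => u k a + Rinv k (G k (x k a)) with hz
    have hzL2 : MemLp z 2 μ :=
      (huL2 k).add ((Rinv k ∘L G k).comp_memLp' hxL2)
    have hpk : Integrable (fun a => ⟪P k (x k a), x k a⟫) μ :=
      int_inner_aux ((P k).comp_memLp' hxL2) hxL2
    have hgk : Integrable (fun a => ⟪Rcal k (z a), z a⟫) μ :=
      int_inner_aux ((Rcal k).comp_memLp' hzL2) hzL2
    have hptwise : ∀ a,
        ⟪M k (x k a), x k a⟫ + 2 * ⟪L k (x k a), u k a⟫ + ⟪R k (u k a), u k a⟫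
        = ⟪P k (x k a), x k a⟫ + ⟪Rcal k (z a), z a⟫ - (q a + s a) := by
      intro a
      have := cos_aux P' (P k) (hPsa (k+1)) (A k) (C k) (B k) (D k) (M k) (L k)
        (R k) (Rcal k) (Rinv k) (G k) (hRsa k) (hRcal k) (hG k) (hinv1 k hk)
        (hRic k hk) (x k a) (u k a)
      simp only [hqdef, hrdef, hsdef, hv, hw, hz]
      linarith [this]
    rw [integral_congr_ae (Filter.Eventually.of_forall hptwise)]
    have h1 : ∫ a, (⟪P k (x k a), x k a⟫ + ⟪Rcal k (z a), z a⟫ - (q a + s a)) ∂μ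
        = (∫ a, (⟪P k (x k a), x k a⟫ + ⟪Rcal k (z a), z a⟫) ∂μ)
          - ∫ a, (q a + s a) ∂μ := integral_sub (hpk.add hgk) (hq.add hs)
    have h2 : ∫ a, (⟪P k (x k a), x k a⟫ + ⟪Rcal k (z a), z a⟫) ∂μ
        = (∫ a, ⟪P k (x k a), x k a⟫ ∂μ) + ∫ a, ⟪Rcal k (z a), z a⟫ ∂μ :=
      integral_add hpk hgk
    have h3 : ∫ a, (q a + s a) ∂μ = (∫ a, q a ∂μ) + ∫ a, s a ∂μ :=
      integral_add hq hs
    rw [h1, h2, h3, ← hexp]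
    ring
  -- integrability of the summands
  have hfint : ∀ k ∈ Finset.range (N+1), Integrable (fun a =>
      ⟪M k (x k a), x k a⟫ + 2 * ⟪L k (x k a), u k a⟫ + ⟪R k (u k a), u k a⟫) μ := by
    intro k hk
    have hxL2 := (hxP k (by have := Finset.mem_range.1 hk; omega)).2
    exact ((int_inner_aux ((M k).comp_memLp' hxL2) hxL2).add
        ((int_inner_aux ((L k).comp_memLp' hxL2) (huL2 k)).const_mul 2)).add
      (int_inner_aux ((R k).comp_memLp' (huL2 k)) (huL2 k))
  have hgint : ∀ k ∈ Finset.range (N+1), Integrable (fun a =>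
      ⟪Rcal k (u k a + Rinv k (G k (x k a))),
        u k a + Rinv k (G k (x k a))⟫) μ := by
    intro k hk
    have hxL2 := (hxP k (by have := Finset.mem_range.1 hk; omega)).2
    have hzL2 : MemLp (fun a => u k a + Rinv k (G k (x k a))) 2 μ :=
      (huL2 k).add ((Rinv k ∘L G k).comp_memLp' hxL2)
    exact int_inner_aux ((Rcal k).comp_memLp' hzL2) hzL2
  have hxN1 : MemLp (x (N+1)) 2 μ := (hxP (N+1) le_rfl).2
  have hSint : Integrable (fun a => ⟪S (x (N+1) a), x (N+1) a⟫) μ :=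
    int_inner_aux (S.comp_memLp' hxN1) hxN1
  rw [integral_add (integrable_finset_sum _ hfint) hSint,
    integral_finset_sum _ hfint, integral_finset_sum _ hgint]
  have hsum : ∑ k ∈ Finset.range (N+1), ∫ a,
      (⟪M k (x k a), x k a⟫ + 2 * ⟪L k (x k a), u k a⟫ + ⟪R k (u k a), u k a⟫) ∂μ
      = ((∫ a, ⟪P 0 (x 0 a), x 0 a⟫ ∂μ)
          - ∫ a, ⟪P (N+1) (x (N+1) a), x (N+1) a⟫ ∂μ)
        + ∑ k ∈ Finset.range (N+1), ∫ a,
          ⟪Rcal k (u k a + Rinv k (G k (x k a))),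
            u k a + Rinv k (G k (x k a))⟫ ∂μ := by
    rw [← Finset.sum_range_sub' (fun k => ∫ a, ⟪P k (x k a), x k a⟫ ∂μ) (N+1),
      ← Finset.sum_add_distrib]
    refine Finset.sum_congr rfl fun k hk => ?_
    exact key k (Nat.lt_succ_iff.mp (Finset.mem_range.1 hk))
  rw [hsum]
  have h0 : ∫ a, ⟪P 0 (x 0 a), x 0 a⟫ ∂μ = ⟪P 0 x₀, x₀⟫ := by
    rw [hx0]
    simp
  have hN1 : ∫ a, ⟪P (N+1) (x (N+1) a), x (N+1) a⟫ ∂μ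
      = ∫ a, ⟪S (x (N+1) a), x (N+1) a⟫ ∂μ := by rw [hPN]
  rw [h0, hN1]
  ring
end

section
/- (Well-posedness, Proposition 1) Under the setting of the completion-of-squares lemma, if additionally each ℛ(k) is uniformly positive (ℛ(k) ≥ ϑ_k I for some ϑ_k > 0), then for every initial state x₀ ∈ H and every admissible control u, J(x₀,u) ≥ ⟨P(0)x₀, x₀⟩; in particular inf_u J(x₀,u) > −∞. -/
open scoped RealInnerProductSpace
open ContinuousLinearMap MeasureTheory

lemma aux_integrable_inner {Ω : Type*} [MeasurableSpace Ω] {μ : Measure Ω}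
    {H : Type*} [NormedAddCommGroup H] [InnerProductSpace ℝ H]
    {f g : Ω → H} (hf : MemLp f 2 μ) (hg : MemLp g 2 μ) :
    Integrable (fun a => ⟪f a, g a⟫) μ := by
  have h1 : Integrable (fun a => ‖f a‖ ^ 2) μ :=
    (memLp_two_iff_integrable_sq_norm hf.aestronglyMeasurable).1 hf
  have h2 : Integrable (fun a => ‖g a‖ ^ 2) μ :=
    (memLp_two_iff_integrable_sq_norm hg.aestronglyMeasurable).1 hg
  refine Integrable.mono' (h1.add h2) (hf.aestronglyMeasurable.inner hg.aestronglyMeasurable) ?_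
  refine Filter.Eventually.of_forall fun a => ?_
  have := abs_real_inner_le_norm (f a) (g a)
  have h3 : ‖f a‖ * ‖g a‖ ≤ ‖f a‖ ^ 2 + ‖g a‖ ^ 2 := by nlinarith [sq_nonneg (‖f a‖ - ‖g a‖)]
  simp only [Pi.add_apply]
  rw [Real.norm_eq_abs]
  linarith

/-- Well-posedness (Proposition 1): under the completion-of-squares setting, if each
`ℛ(k)` is uniformly positive, then for every initial state and every admissible control,
`J(x₀,u) ≥ ⟪P(0)x₀,x₀⟫`; in particular `inf_u J(x₀,u) > −∞`. -/
theorem stmt_6 {H U : Type*}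
    [NormedAddCommGroup H] [InnerProductSpace ℝ H] [CompleteSpace H]
    [NormedAddCommGroup U] [InnerProductSpace ℝ U] [CompleteSpace U]
    {Ω : Type*} [MeasurableSpace Ω] (μ : Measure Ω) [IsProbabilityMeasure μ]
    (N : ℕ)
    (A C : ℕ → H →L[ℝ] H) (B D : ℕ → U →L[ℝ] H)
    (M : ℕ → H →L[ℝ] H) (hM : ∀ k, IsSelfAdjoint (M k))
    (S : H →L[ℝ] H) (hSsa : IsSelfAdjoint S)
    (L : ℕ → H →L[ℝ] U)
    (R : ℕ → U →L[ℝ] U) (hRsa : ∀ k, IsSelfAdjoint (R k))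
    (P : ℕ → H →L[ℝ] H) (hPsa : ∀ k, IsSelfAdjoint (P k)) (hPN : P (N + 1) = S)
    (Rcal : ℕ → U →L[ℝ] U) (G : ℕ → H →L[ℝ] U) (Rinv : ℕ → U →L[ℝ] U)
    (hRcal : ∀ k, Rcal k = R k + adjoint (B k) ∘L P (k+1) ∘L B k
        + adjoint (D k) ∘L P (k+1) ∘L D k)
    (hG : ∀ k, G k = L k + adjoint (B k) ∘L P (k+1) ∘L A k
        + adjoint (D k) ∘L P (k+1) ∘L C k)
    (hinv1 : ∀ k ≤ N, Rcal k ∘L Rinv k = ContinuousLinearMap.id ℝ U)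
    (hinv2 : ∀ k ≤ N, Rinv k ∘L Rcal k = ContinuousLinearMap.id ℝ U)
    (hRic : ∀ k ≤ N, P k = adjoint (A k) ∘L P (k+1) ∘L A k
        + adjoint (C k) ∘L P (k+1) ∘L C k + M k
        - adjoint (G k) ∘L Rinv k ∘L G k)
    (hRpos : ∀ k ≤ N, ∃ ϑ : ℝ, 0 < ϑ ∧ ∀ v : U, ϑ * ‖v‖ ^ 2 ≤ ⟪Rcal k v, v⟫)
    (ω : ℕ → Ω → ℝ) (hωmeas : ∀ k, Measurable (ω k))
    (hωL2 : ∀ k, MemLp (ω k) 2 μ)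
    (hmean : ∀ k, ∫ a, ω k a ∂μ = 0) (hvar : ∀ k, ∫ a, (ω k a) ^ 2 ∂μ = 1)
    (F : ℕ → MeasurableSpace Ω)
    (hF : ∀ k, F k = ⨆ i ∈ Finset.range k, MeasurableSpace.comap (ω i) inferInstance)
    (hindep : ∀ k, ProbabilityTheory.Indep
      (MeasurableSpace.comap (ω k) inferInstance) (F k) μ)
    (x₀ : H) (u : ℕ → Ω → U)
    (humeas : ∀ k, StronglyMeasurable[F k] (u k))
    (huL2 : ∀ k, MemLp (u k) 2 μ)
    (x : ℕ → Ω → H) (hx0 : x 0 = fun _ => x₀)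
    (hxrec : ∀ k ≤ N, ∀ a : Ω, x (k + 1) a =
        A k (x k a) + B k (u k a) + ω k a • (C k (x k a) + D k (u k a))) :
    ⟪P 0 x₀, x₀⟫ ≤
      ∫ a, ((∑ k ∈ Finset.range (N + 1),
          (⟪M k (x k a), x k a⟫ + 2 * ⟪L k (x k a), u k a⟫ + ⟪R k (u k a), u k a⟫))
        + ⟪S (x (N + 1) a), x (N + 1) a⟫) ∂μ := by
  classical
  -- the filtration is below the ambient σ-algebra and monotone
  have hFle : ∀ k, F k ≤ (inferInstance : MeasurableSpace Ω) := by
    intro k; rw [hF]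
    exact iSup_le fun i => iSup_le fun _ => (hωmeas i).comap_le
  have hFmono : Monotone F := by
    intro j k hjk
    rw [hF, hF]
    refine iSup_le fun i => iSup_le fun hi => ?_
    exact le_iSup₂ (f := fun i (_ : i ∈ Finset.range k) =>
        MeasurableSpace.comap (ω i) inferInstance) i
      (Finset.mem_range.2 (lt_of_lt_of_le (Finset.mem_range.1 hi) hjk))
  have hcle : ∀ k, MeasurableSpace.comap (ω k) inferInstance ≤ F (k + 1) := by
    intro k; rw [hF]
    exact le_iSup₂ (f := fun i (_ : i ∈ Finset.range (k + 1)) =>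
        MeasurableSpace.comap (ω i) inferInstance) k (Finset.self_mem_range_succ k)
  -- strong measurability of the state wrt the filtration
  have hxmeas : ∀ k, k ≤ N + 1 → StronglyMeasurable[F k] (x k) := by
    intro k
    induction k with
    | zero => intro _; rw [hx0]; exact stronglyMeasurable_const
    | succ k ih =>
      intro hk
      have hkN : k ≤ N := Nat.lt_succ_iff.mp hk
      have hx := (ih (hkN.trans (Nat.le_succ N))).mono (hFmono (Nat.le_succ k))
      have hu := (humeas k).mono (hFmono (Nat.le_succ k))
      have hωm : StronglyMeasurable[F (k + 1)] (ω k) :=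
        (Measurable.of_comap_le (hcle k)).stronglyMeasurable
      have hxe : x (k + 1) = fun a =>
          A k (x k a) + B k (u k a) + ω k a • (C k (x k a) + D k (u k a)) :=
        funext (hxrec k hkN)
      rw [hxe]
      exact (((A k).continuous.comp_stronglyMeasurable hx).add
          ((B k).continuous.comp_stronglyMeasurable hu)).add
        (hωm.smul (((C k).continuous.comp_stronglyMeasurable hx).add
          ((D k).continuous.comp_stronglyMeasurable hu)))
  -- independence/product helper
  have hindepmul : ∀ (k : ℕ) (W g : Ω → ℝ),
      Measurable[MeasurableSpace.comap (ω k) inferInstance] W →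
      StronglyMeasurable[F k] g → Integrable W μ → Integrable g μ →
      Integrable (fun a => W a * g a) μ ∧
        ∫ a, W a * g a ∂μ = (∫ a, W a ∂μ) * ∫ a, g a ∂μ := by
    intro k W g hW hg hWi hgi
    have hgm : @Measurable Ω ℝ (F k) _ g := hg.measurable
    have hIndep : ProbabilityTheory.IndepFun W g μ := by
      rw [ProbabilityTheory.IndepFun_iff_Indep]
      exact ProbabilityTheory.indep_of_indep_of_le_left
        (ProbabilityTheory.indep_of_indep_of_le_right (hindep k)
          (measurable_iff_comap_le.1 hgm))
        (measurable_iff_comap_le.1 hW)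
    refine ⟨hIndep.integrable_mul hWi hgi, ?_⟩
    exact hIndep.integral_fun_mul_eq_mul_integral hWi.aestronglyMeasurable hgi.aestronglyMeasurable
  -- square-integrability of the state
  have hx2 : ∀ k, k ≤ N + 1 → MemLp (x k) 2 μ := by
    intro k
    induction k with
    | zero => intro _; rw [hx0]; exact memLp_const x₀
    | succ k ih =>
      intro hk
      have hkN : k ≤ N := Nat.lt_succ_iff.mp hk
      have hxk := ih (hkN.trans (Nat.le_succ N))
      have hxkSM := hxmeas k (hkN.trans (Nat.le_succ N))
      set z : Ω → H := fun a => C k (x k a) + D k (u k a) with hzdef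
      have hz2 : MemLp z 2 μ := ((C k).comp_memLp' hxk).add ((D k).comp_memLp' (huL2 k))
      have hzSM : StronglyMeasurable[F k] z :=
        ((C k).continuous.comp_stronglyMeasurable hxkSM).add
          ((D k).continuous.comp_stronglyMeasurable (humeas k))
      have hnz : Integrable (fun a => ‖z a‖ ^ 2) μ :=
        (memLp_two_iff_integrable_sq_norm hz2.aestronglyMeasurable).1 hz2
      have hnzSM : StronglyMeasurable[F k] (fun a => ‖z a‖ ^ 2) := by
        have h : StronglyMeasurable[F k] (fun a => ‖z a‖ * ‖z a‖) := hzSM.norm.mul hzSM.norm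
        simpa only [pow_two] using h
      have hω2m : Measurable[MeasurableSpace.comap (ω k) inferInstance]
          (fun a => ω k a ^ 2) := (Measurable.of_comap_le le_rfl).pow_const 2
      have hmul : Integrable (fun a => ω k a ^ 2 * ‖z a‖ ^ 2) μ :=
        (hindepmul k (fun a => ω k a ^ 2) (fun a => ‖z a‖ ^ 2) hω2m hnzSM
          (hωL2 k).integrable_sq hnz).1
      have hwz : MemLp (fun a => ω k a • z a) 2 μ := by
        rw [memLp_two_iff_integrable_sq_norm (f := fun a => ω k a • z a)
          (((hωmeas k).aestronglyMeasurable).smul hz2.aestronglyMeasurable)]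
        have : ∀ a, ‖ω k a • z a‖ ^ 2 = ω k a ^ 2 * ‖z a‖ ^ 2 := by
          intro a
          rw [norm_smul, mul_pow, Real.norm_eq_abs, sq_abs]
        simpa only [this] using hmul
      have hxe : x (k + 1) = fun a =>
          A k (x k a) + B k (u k a) + ω k a • z a := funext (hxrec k hkN)
      rw [hxe]
      exact (((A k).comp_memLp' hxk).add ((B k).comp_memLp' (huL2 k))).add hwz
  -- quadratic expansion with a self-adjoint operator
  have hexp : ∀ (k : ℕ) (c : ℝ) (v w : H),
      ⟪P k (v + c • w), v + c • w⟫
        = ⟪P k v, v⟫ + c * (2 * ⟪P k v, w⟫) + c ^ 2 * ⟪P k w, w⟫ := by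
    intro k c v w
    have hsym : ⟪P k w, v⟫ = ⟪P k v, w⟫ := by
      conv_lhs => rw [← (hPsa k).adjoint_eq]
      rw [ContinuousLinearMap.adjoint_inner_left]
      exact real_inner_comm _ _
    simp only [map_add, _root_.map_smul, inner_add_left, inner_add_right,
      real_inner_smul_left, real_inner_smul_right, hsym]
    ring
  -- nonnegativity of the quadratic form of Rcal
  have hRnn : ∀ k, k ≤ N → ∀ w : U, 0 ≤ ⟪Rcal k w, w⟫ := by
    intro k hk w
    obtain ⟨ϑ, hϑ, hb⟩ := hRpos k hk
    have : (0 : ℝ) ≤ ϑ * ‖w‖ ^ 2 := by positivity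
    linarith [hb w]
  -- the completion-of-squares pointwise identity
  have hsquare : ∀ k, k ≤ N → ∀ (ξ : H) (η : U),
      ⟪M k ξ, ξ⟫ + 2 * ⟪L k ξ, η⟫ + ⟪R k η, η⟫
        + ⟪P (k+1) (A k ξ + B k η), A k ξ + B k η⟫
        + ⟪P (k+1) (C k ξ + D k η), C k ξ + D k η⟫
        - ⟪P k ξ, ξ⟫
      = ⟪Rcal k (η + Rinv k (G k ξ)), η + Rinv k (G k ξ)⟫ := by
    intro k hk ξ η
    have hP' := hPsa (k+1)
    have hRcalsa : IsSelfAdjoint (Rcal k) := by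
      rw [hRcal k]
      exact ((hRsa k).add (hP'.adjoint_conj (B k))).add (hP'.adjoint_conj (D k))
    set v := Rinv k (G k ξ) with hvdef
    have hRv : Rcal k v = G k ξ := by
      have := congrArg (fun T : U →L[ℝ] U => T (G k ξ)) (hinv1 k hk)
      simpa using this
    have hRHS : ⟪Rcal k (η + v), η + v⟫
        = ⟪Rcal k η, η⟫ + 2 * ⟪G k ξ, η⟫ + ⟪Rinv k (G k ξ), G k ξ⟫ := by
      have h1 : ⟪Rcal k η, v⟫ = ⟪G k ξ, η⟫ := by
        conv_lhs => rw [← hRcalsa.adjoint_eq]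
        rw [ContinuousLinearMap.adjoint_inner_left, hRv]
        exact real_inner_comm _ _
      have h2 : ⟪G k ξ, v⟫ = ⟪Rinv k (G k ξ), G k ξ⟫ := real_inner_comm _ _
      rw [map_add, inner_add_left, inner_add_right, inner_add_right, hRv, h1, h2]
      ring
    have hPk : ⟪P k ξ, ξ⟫ = ⟪P (k+1) (A k ξ), A k ξ⟫ + ⟪P (k+1) (C k ξ), C k ξ⟫
        + ⟪M k ξ, ξ⟫ - ⟪Rinv k (G k ξ), G k ξ⟫ := by
      rw [hRic k hk]
      simp only [ContinuousLinearMap.add_apply, ContinuousLinearMap.sub_apply,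
        ContinuousLinearMap.comp_apply, inner_add_left, inner_sub_left,
        ContinuousLinearMap.adjoint_inner_left]
    have hGexp : ⟪G k ξ, η⟫ = ⟪L k ξ, η⟫ + ⟪P (k+1) (A k ξ), B k η⟫
        + ⟪P (k+1) (C k ξ), D k η⟫ := by
      rw [hG k]
      simp only [ContinuousLinearMap.add_apply, ContinuousLinearMap.comp_apply,
        inner_add_left, ContinuousLinearMap.adjoint_inner_left]
    have hRcexp : ⟪Rcal k η, η⟫ = ⟪R k η, η⟫ + ⟪P (k+1) (B k η), B k η⟫
        + ⟪P (k+1) (D k η), D k η⟫ := by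
      rw [hRcal k]
      simp only [ContinuousLinearMap.add_apply, ContinuousLinearMap.comp_apply,
        inner_add_left, ContinuousLinearMap.adjoint_inner_left]
    have hq1 : ⟪P (k+1) (A k ξ + B k η), A k ξ + B k η⟫
        = ⟪P (k+1) (A k ξ), A k ξ⟫ + 2 * ⟪P (k+1) (A k ξ), B k η⟫
          + ⟪P (k+1) (B k η), B k η⟫ := by
      have := hexp (k+1) 1 (A k ξ) (B k η)
      simpa using this
    have hq2 : ⟪P (k+1) (C k ξ + D k η), C k ξ + D k η⟫
        = ⟪P (k+1) (C k ξ), C k ξ⟫ + 2 * ⟪P (k+1) (C k ξ), D k η⟫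
          + ⟪P (k+1) (D k η), D k η⟫ := by
      have := hexp (k+1) 1 (C k ξ) (D k η)
      simpa using this
    rw [hRHS]
    linarith [hPk, hGexp, hRcexp, hq1, hq2]
  -- expectations
  set e : ℕ → ℝ := fun k => ∫ a, ⟪P k (x k a), x k a⟫ ∂μ with hedef
  set s : ℕ → ℝ := fun k => ∫ a,
      (⟪M k (x k a), x k a⟫ + 2 * ⟪L k (x k a), u k a⟫ + ⟪R k (u k a), u k a⟫) ∂μ with hsdef
  have hstageInt : ∀ k, k ≤ N → Integrable (fun a =>
      ⟪M k (x k a), x k a⟫ + 2 * ⟪L k (x k a), u k a⟫ + ⟪R k (u k a), u k a⟫) μ := by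
    intro k hk
    have hxk := hx2 k (hk.trans (Nat.le_succ N))
    exact ((aux_integrable_inner ((M k).comp_memLp' hxk) hxk).add
        ((aux_integrable_inner ((L k).comp_memLp' hxk) (huL2 k)).const_mul 2)).add
      (aux_integrable_inner ((R k).comp_memLp' (huL2 k)) (huL2 k))
  -- the main one-step estimate
  have hkey : ∀ k, k ≤ N → e k ≤ s k + e (k + 1) := by
    intro k hk
    have hk1 : k ≤ N + 1 := hk.trans (Nat.le_succ N)
    have hxk := hx2 k hk1
    have hxkSM := hxmeas k hk1
    set y : Ω → H := fun a => A k (x k a) + B k (u k a) with hydef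
    set z : Ω → H := fun a => C k (x k a) + D k (u k a) with hzdef
    have hy2 : MemLp y 2 μ := ((A k).comp_memLp' hxk).add ((B k).comp_memLp' (huL2 k))
    have hz2 : MemLp z 2 μ := ((C k).comp_memLp' hxk).add ((D k).comp_memLp' (huL2 k))
    have hySM : StronglyMeasurable[F k] y :=
      ((A k).continuous.comp_stronglyMeasurable hxkSM).add
        ((B k).continuous.comp_stronglyMeasurable (humeas k))
    have hzSM : StronglyMeasurable[F k] z :=
      ((C k).continuous.comp_stronglyMeasurable hxkSM).add
        ((D k).continuous.comp_stronglyMeasurable (humeas k))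
    have iq1 : Integrable (fun a => ⟪P (k+1) (y a), y a⟫) μ :=
      aux_integrable_inner ((P (k+1)).comp_memLp' hy2) hy2
    have iq2 : Integrable (fun a => ⟪P (k+1) (z a), z a⟫) μ :=
      aux_integrable_inner ((P (k+1)).comp_memLp' hz2) hz2
    have igc : Integrable (fun a => 2 * ⟪P (k+1) (y a), z a⟫) μ :=
      (aux_integrable_inner ((P (k+1)).comp_memLp' hy2) hz2).const_mul 2
    have hgcSM : StronglyMeasurable[F k] (fun a => 2 * ⟪P (k+1) (y a), z a⟫) :=
      (((P (k+1)).continuous.comp_stronglyMeasurable hySM).inner hzSM).const_mul 2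
    have hq2SM : StronglyMeasurable[F k] (fun a => ⟪P (k+1) (z a), z a⟫) :=
      ((P (k+1)).continuous.comp_stronglyMeasurable hzSM).inner hzSM
    have hωm : Measurable[MeasurableSpace.comap (ω k) inferInstance] (ω k) :=
      Measurable.of_comap_le le_rfl
    have hprod1 := hindepmul k (ω k) (fun a => 2 * ⟪P (k+1) (y a), z a⟫) hωm hgcSM
      ((hωL2 k).integrable one_le_two) igc
    have hprod2 := hindepmul k (fun a => ω k a ^ 2) (fun a => ⟪P (k+1) (z a), z a⟫)
      ((Measurable.of_comap_le le_rfl).pow_const 2) hq2SM (hωL2 k).integrable_sq iq2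
    have ip1 : Integrable (fun a => ω k a * (2 * ⟪P (k+1) (y a), z a⟫)) μ := hprod1.1
    have ip2 : Integrable (fun a => ω k a ^ 2 * ⟪P (k+1) (z a), z a⟫) μ := hprod2.1
    have ip12 : Integrable (fun a => ω k a * (2 * ⟪P (k+1) (y a), z a⟫)
        + ω k a ^ 2 * ⟪P (k+1) (z a), z a⟫) μ := ip1.add ip2
    have ie1 : ∫ a, ω k a * (2 * ⟪P (k+1) (y a), z a⟫) ∂μ
        = (∫ a, ω k a ∂μ) * ∫ a, 2 * ⟪P (k+1) (y a), z a⟫ ∂μ := hprod1.2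
    have ie2 : ∫ a, ω k a ^ 2 * ⟪P (k+1) (z a), z a⟫ ∂μ
        = (∫ a, ω k a ^ 2 ∂μ) * ∫ a, ⟪P (k+1) (z a), z a⟫ ∂μ := hprod2.2
    -- the step identity for e (k+1)
    have hrw : ∀ a, ⟪P (k+1) (x (k+1) a), x (k+1) a⟫
        = ⟪P (k+1) (y a), y a⟫ + (ω k a * (2 * ⟪P (k+1) (y a), z a⟫)
          + ω k a ^ 2 * ⟪P (k+1) (z a), z a⟫) := by
      intro a
      have h := hexp (k+1) (ω k a) (y a) (z a)
      rw [hxrec k hk a]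
      show ⟪P (k+1) (y a + ω k a • z a), y a + ω k a • z a⟫ = _
      rw [h]
      ring
    have hstep : e (k + 1)
        = (∫ a, ⟪P (k+1) (y a), y a⟫ ∂μ) + ∫ a, ⟪P (k+1) (z a), z a⟫ ∂μ := by
      have h1 : e (k + 1) = ∫ a, (⟪P (k+1) (y a), y a⟫ + (ω k a * (2 * ⟪P (k+1) (y a), z a⟫)
          + ω k a ^ 2 * ⟪P (k+1) (z a), z a⟫)) ∂μ :=
        integral_congr_ae (Filter.Eventually.of_forall hrw)
      rw [h1, integral_add iq1 ip12, integral_add ip1 ip2, ie1, ie2, hmean k, hvar k]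
      ring
    -- pointwise inequality from completion of squares
    have hpt : ∀ a, ⟪P k (x k a), x k a⟫ - ⟪P (k+1) (y a), y a⟫ - ⟪P (k+1) (z a), z a⟫
        ≤ ⟪M k (x k a), x k a⟫ + 2 * ⟪L k (x k a), u k a⟫ + ⟪R k (u k a), u k a⟫ := by
      intro a
      have h := hsquare k hk (x k a) (u k a)
      have hnn := hRnn k hk (u k a + Rinv k (G k (x k a)))
      rw [← h] at hnn
      show ⟪P k (x k a), x k a⟫
          - ⟪P (k+1) (A k (x k a) + B k (u k a)), A k (x k a) + B k (u k a)⟫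
          - ⟪P (k+1) (C k (x k a) + D k (u k a)), C k (x k a) + D k (u k a)⟫ ≤ _
      linarith
    have iPk : Integrable (fun a => ⟪P k (x k a), x k a⟫) μ :=
      aux_integrable_inner ((P k).comp_memLp' hxk) hxk
    have iPy : Integrable (fun a => ⟪P k (x k a), x k a⟫ - ⟪P (k+1) (y a), y a⟫) μ :=
      iPk.sub iq1
    have hmono : ∫ a, (⟪P k (x k a), x k a⟫ - ⟪P (k+1) (y a), y a⟫
          - ⟪P (k+1) (z a), z a⟫) ∂μ ≤ s k :=
      integral_mono (iPy.sub iq2) (hstageInt k hk) hpt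
    rw [integral_sub iPy iq2, integral_sub iPk iq1] at hmono
    have heq : e k = ∫ a, ⟪P k (x k a), x k a⟫ ∂μ := rfl
    rw [heq]
    linarith
  -- telescoping
  have htel : ∀ j, j ≤ N + 1 → e 0 ≤ (∑ k ∈ Finset.range j, s k) + e j := by
    intro j
    induction j with
    | zero => intro _; simp
    | succ j ih =>
      intro hj
      have hjN : j ≤ N := Nat.lt_succ_iff.mp hj
      have h1 := ih (hjN.trans (Nat.le_succ N))
      have h2 := hkey j hjN
      rw [Finset.sum_range_succ]
      linarith
  -- compute e 0
  have h0 : e 0 = ⟪P 0 x₀, x₀⟫ := by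
    rw [hedef]
    simp only [hx0]
    simp [integral_const]
  -- split the goal integral
  have hsplit : ∫ a, ((∑ k ∈ Finset.range (N + 1),
          (⟪M k (x k a), x k a⟫ + 2 * ⟪L k (x k a), u k a⟫ + ⟪R k (u k a), u k a⟫))
        + ⟪S (x (N + 1) a), x (N + 1) a⟫) ∂μ
      = (∑ k ∈ Finset.range (N + 1), s k) + e (N + 1) := by
    have hInt : ∀ k ∈ Finset.range (N + 1), Integrable (fun a =>
        ⟪M k (x k a), x k a⟫ + 2 * ⟪L k (x k a), u k a⟫ + ⟪R k (u k a), u k a⟫) μ :=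
      fun k hkmem => hstageInt k (Nat.lt_succ_iff.mp (Finset.mem_range.1 hkmem))
    have hterm : Integrable (fun a => ⟪S (x (N + 1) a), x (N + 1) a⟫) μ :=
      aux_integrable_inner (S.comp_memLp' (hx2 (N + 1) le_rfl)) (hx2 (N + 1) le_rfl)
    rw [integral_add (integrable_finset_sum _ hInt) hterm,
      integral_finset_sum _ hInt]
    have hT : ∫ a, ⟪S (x (N + 1) a), x (N + 1) a⟫ ∂μ = e (N + 1) := by
      show _ = ∫ a, ⟪P (N + 1) (x (N + 1) a), x (N + 1) a⟫ ∂μ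
      rw [hPN]
    rw [hT]
  rw [hsplit, ← h0]
  exact htel (N + 1) le_rfl
end

section
/- (Optimal feedback, sufficiency part of Theorem 1) Under the setting of the completion-of-squares lemma with each ℛ(k) positive, the feedback control u*(k) = −ℛ(k)⁻¹𝒢(k)x(k) achieves J(x₀,u*) = ⟨P(0)x₀,x₀⟩, and for every admissible control u, J(x₀,u) ≥ J(x₀,u*), with equality only if u(k) = u*(k) almost surely for all k. -/
open scoped RealInnerProductSpace
open ContinuousLinearMap MeasureTheory ProbabilityTheory

section helpers
variable {Ω : Type*} [mΩ : MeasurableSpace Ω] {μ : Measure Ω}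

lemma my_indepFun {mw mF : MeasurableSpace Ω} (h : Indep mw mF μ)
    {β γ : Type*} [MeasurableSpace β] [MeasurableSpace γ] {ψ : Ω → β} {φ : Ω → γ}
    (hψ : Measurable[mw] ψ) (hφ : Measurable[mF] φ) : IndepFun ψ φ μ :=
  indep_of_indep_of_le_right (indep_of_indep_of_le_left h hψ.comap_le) hφ.comap_le

lemma my_integrable_inner {E : Type*} [NormedAddCommGroup E] [InnerProductSpace ℝ E]
    {f g : Ω → E} (hf : MemLp f 2 μ) (hg : MemLp g 2 μ) :
    Integrable (fun a => ⟪f a, g a⟫) μ := by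
  have h := L2.integrable_inner (𝕜 := ℝ) (hf.toLp f) (hg.toLp g)
  refine h.congr ?_
  filter_upwards [hf.coeFn_toLp, hg.coeFn_toLp] with a h1 h2
  rw [h1, h2]

lemma my_integral_mul [IsProbabilityMeasure μ]
    {w : Ω → ℝ} {mF : MeasurableSpace Ω}
    (hindep : Indep (MeasurableSpace.comap w inferInstance) mF μ)
    {ψ : ℝ → ℝ} (hψ : Measurable ψ) (hint : Integrable (fun a => ψ (w a)) μ)
    {φ : Ω → ℝ} (hφ : Measurable[mF] φ) (hφint : Integrable φ μ) :
    Integrable (fun a => ψ (w a) * φ a) μ ∧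
      ∫ a, ψ (w a) * φ a ∂μ = (∫ a, ψ (w a) ∂μ) * ∫ a, φ a ∂μ := by
  have hwm : Measurable[MeasurableSpace.comap w inferInstance] w :=
    Measurable.of_comap_le le_rfl
  have hIF : IndepFun (fun a => ψ (w a)) φ μ :=
    my_indepFun (mΩ := mΩ) hindep (hψ.comp hwm) hφ
  exact ⟨hIF.integrable_mul hint hφint, hIF.integral_mul_eq_mul_integral hint.1 hφint.1⟩

lemma my_smul_memℒp {H : Type*} [NormedAddCommGroup H] [Module ℝ H] [NormSMulClass ℝ H]
    [IsProbabilityMeasure μ]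
    {w : Ω → ℝ} {g : Ω → H} {mF : MeasurableSpace Ω} (hle : mF ≤ mΩ)
    (hindep : Indep (MeasurableSpace.comap w inferInstance) mF μ)
    (hw : Measurable[mΩ] w) (hwL2 : MemLp w 2 μ)
    (hg : StronglyMeasurable[mF] g) (hgL2 : MemLp g 2 μ) :
    MemLp (fun a => w a • g a) 2 μ := by
  have hg' : StronglyMeasurable[mΩ] g := hg.mono hle
  have hsm : StronglyMeasurable[mΩ] (fun a => w a • g a) :=
    (hw.stronglyMeasurable : StronglyMeasurable[mΩ] w).smul hg'
  rw [memLp_two_iff_integrable_sq_norm hsm.aestronglyMeasurable]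
  have hwm : Measurable[MeasurableSpace.comap w inferInstance] w :=
    Measurable.of_comap_le le_rfl
  have h1 : Measurable[MeasurableSpace.comap w inferInstance] (fun a => (w a) ^ 2) :=
    hwm.pow_const 2
  have h2 : Measurable[mF] (fun a => ‖g a‖ ^ 2) := (hg.norm.measurable).pow_const 2
  have hIF : IndepFun (fun a => (w a) ^ 2) (fun a => ‖g a‖ ^ 2) μ :=
    my_indepFun (mΩ := mΩ) hindep h1 h2
  have hint : Integrable (fun a => (w a) ^ 2 * ‖g a‖ ^ 2) μ :=
    hIF.integrable_mul hwL2.integrable_sq hgL2.norm.integrable_sq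
  refine hint.congr (Filter.Eventually.of_forall fun a => ?_)
  simp only [norm_smul, mul_pow, sq_abs, Real.norm_eq_abs]

end helpers

section alg
variable {H U : Type*}
  [NormedAddCommGroup H] [InnerProductSpace ℝ H] [CompleteSpace H]
  [NormedAddCommGroup U] [InnerProductSpace ℝ U] [CompleteSpace U]

lemma my_sa_comm {T : H →L[ℝ] H} (hT : IsSelfAdjoint T) (a b : H) :
    ⟪T a, b⟫ = ⟪T b, a⟫ := by
  conv_lhs => rw [← hT.adjoint_eq]
  rw [ContinuousLinearMap.adjoint_inner_left, real_inner_comm]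

lemma my_expand {T : H →L[ℝ] H} (hT : IsSelfAdjoint T) (c : ℝ) (f g : H) :
    ⟪T (f + c • g), f + c • g⟫ =
      ⟪T f, f⟫ + c * (2 * ⟪T f, g⟫) + c ^ 2 * ⟪T g, g⟫ := by
  have h := my_sa_comm hT g f
  simp only [map_add, _root_.map_smul, inner_add_left, inner_add_right, real_inner_smul_left,
    real_inner_smul_right]
  linear_combination c * h

lemma my_step_alg {A C P' Pk Mk : H →L[ℝ] H} {B D : U →L[ℝ] H} {Lk : H →L[ℝ] U}
    {Rk Rc Ri : U →L[ℝ] U} {G : H →L[ℝ] U}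
    (hP' : IsSelfAdjoint P') (hRk : IsSelfAdjoint Rk)
    (hRc : Rc = Rk + adjoint B ∘L P' ∘L B + adjoint D ∘L P' ∘L D)
    (hG : G = Lk + adjoint B ∘L P' ∘L A + adjoint D ∘L P' ∘L C)
    (hinv1 : Rc ∘L Ri = ContinuousLinearMap.id ℝ U)
    (hRic : Pk = adjoint A ∘L P' ∘L A + adjoint C ∘L P' ∘L C + Mk - adjoint G ∘L Ri ∘L G)
    (ξ : H) (η : U) :
    ⟪Mk ξ, ξ⟫ + 2 * ⟪Lk ξ, η⟫ + ⟪Rk η, η⟫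
      + ⟪P' (A ξ + B η), A ξ + B η⟫ + ⟪P' (C ξ + D η), C ξ + D η⟫ - ⟪Pk ξ, ξ⟫
    = ⟪Rc (η + Ri (G ξ)), η + Ri (G ξ)⟫ := by
  have hRcsa : IsSelfAdjoint Rc := by
    rw [hRc]
    have : IsSelfAdjoint (adjoint B ∘L P' ∘L B) := by
      rw [IsSelfAdjoint, ContinuousLinearMap.star_eq_adjoint]
      simp [ContinuousLinearMap.adjoint_comp, ContinuousLinearMap.adjoint_adjoint,
        hP'.adjoint_eq, ContinuousLinearMap.comp_assoc]
    have h2 : IsSelfAdjoint (adjoint D ∘L P' ∘L D) := by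
      rw [IsSelfAdjoint, ContinuousLinearMap.star_eq_adjoint]
      simp [ContinuousLinearMap.adjoint_comp, ContinuousLinearMap.adjoint_adjoint,
        hP'.adjoint_eq, ContinuousLinearMap.comp_assoc]
    exact (hRk.add this).add h2
  have hRiG : Rc (Ri (G ξ)) = G ξ := by
    have := congrArg (fun T => T (G ξ)) hinv1
    simpa using this
  have e1 : ⟪Pk ξ, ξ⟫ = ⟪P' (A ξ), A ξ⟫ + ⟪P' (C ξ), C ξ⟫ + ⟪Mk ξ, ξ⟫
      - ⟪Ri (G ξ), G ξ⟫ := by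
    rw [hRic]
    simp only [ContinuousLinearMap.sub_apply, ContinuousLinearMap.add_apply,
      ContinuousLinearMap.comp_apply, inner_sub_left, inner_add_left,
      ContinuousLinearMap.adjoint_inner_left]
  have e2 : ⟪G ξ, η⟫ = ⟪Lk ξ, η⟫ + ⟪P' (A ξ), B η⟫ + ⟪P' (C ξ), D η⟫ := by
    rw [hG]
    simp only [ContinuousLinearMap.add_apply, ContinuousLinearMap.comp_apply,
      inner_add_left, ContinuousLinearMap.adjoint_inner_left]
  have e3 : ⟪Rc η, η⟫ = ⟪Rk η, η⟫ + ⟪P' (B η), B η⟫ + ⟪P' (D η), D η⟫ := by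
    rw [hRc]
    simp only [ContinuousLinearMap.add_apply, ContinuousLinearMap.comp_apply,
      inner_add_left, ContinuousLinearMap.adjoint_inner_left]
  have e4 : ⟪Rc (Ri (G ξ)), Ri (G ξ)⟫ = ⟪Ri (G ξ), G ξ⟫ := by
    rw [hRiG, real_inner_comm]
  have e5 : ⟪Rc η, Ri (G ξ)⟫ = ⟪G ξ, η⟫ := by
    rw [my_sa_comm hRcsa, hRiG, real_inner_comm]
  have e6 : ⟪Rc (Ri (G ξ)), η⟫ = ⟪G ξ, η⟫ := by rw [hRiG]
  have f1 : ⟪P' (B η), A ξ⟫ = ⟪P' (A ξ), B η⟫ := my_sa_comm hP' _ _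
  have f2 : ⟪P' (D η), C ξ⟫ = ⟪P' (C ξ), D η⟫ := my_sa_comm hP' _ _
  simp only [map_add, inner_add_left, inner_add_right]
  linear_combination (-1) * e1 - e3 - e4 - e5 - e6 + f1 + f2 - 2 * e2

end alg

lemma my_key {H U : Type*}
    [NormedAddCommGroup H] [InnerProductSpace ℝ H] [CompleteSpace H]
    [NormedAddCommGroup U] [InnerProductSpace ℝ U] [CompleteSpace U]
    {Ω : Type*} [mΩ : MeasurableSpace Ω] (μ : Measure Ω) [IsProbabilityMeasure μ]
    (N : ℕ)
    (A C : ℕ → H →L[ℝ] H) (B D : ℕ → U →L[ℝ] H)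
    (M : ℕ → H →L[ℝ] H) (L : ℕ → H →L[ℝ] U)
    (R : ℕ → U →L[ℝ] U) (hRsa : ∀ k, IsSelfAdjoint (R k))
    (P : ℕ → H →L[ℝ] H) (hPsa : ∀ k, IsSelfAdjoint (P k))
    (Rcal : ℕ → U →L[ℝ] U) (G : ℕ → H →L[ℝ] U) (Rinv : ℕ → U →L[ℝ] U)
    (hRcal : ∀ k, Rcal k = R k + adjoint (B k) ∘L P (k+1) ∘L B k
        + adjoint (D k) ∘L P (k+1) ∘L D k)
    (hG : ∀ k, G k = L k + adjoint (B k) ∘L P (k+1) ∘L A k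
        + adjoint (D k) ∘L P (k+1) ∘L C k)
    (hinv1 : ∀ k ≤ N, Rcal k ∘L Rinv k = ContinuousLinearMap.id ℝ U)
    (hRic : ∀ k ≤ N, P k = adjoint (A k) ∘L P (k+1) ∘L A k
        + adjoint (C k) ∘L P (k+1) ∘L C k + M k
        - adjoint (G k) ∘L Rinv k ∘L G k)
    (ω : ℕ → Ω → ℝ) (hωmeas : ∀ k, Measurable (ω k))
    (hωL2 : ∀ k, MemLp (ω k) 2 μ)
    (hmean : ∀ k, ∫ a, ω k a ∂μ = 0) (hvar : ∀ k, ∫ a, (ω k a) ^ 2 ∂μ = 1)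
    (F : ℕ → MeasurableSpace Ω)
    (hF : ∀ k, F k = ⨆ i ∈ Finset.range k, MeasurableSpace.comap (ω i) inferInstance)
    (hindep : ∀ k, ProbabilityTheory.Indep
      (MeasurableSpace.comap (ω k) inferInstance) (F k) μ)
    (x₀ : H) (u : ℕ → Ω → U)
    (humeas : ∀ k ≤ N, StronglyMeasurable[F k] (u k))
    (huL2 : ∀ k ≤ N, MemLp (u k) 2 μ)
    (x : ℕ → Ω → H) (hx0 : x 0 = fun _ => x₀)
    (hxrec : ∀ k ≤ N, ∀ a : Ω, x (k + 1) a =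
        A k (x k a) + B k (u k a) + ω k a • (C k (x k a) + D k (u k a))) :
    (∀ k ≤ N + 1, StronglyMeasurable[F k] (x k) ∧ MemLp (x k) 2 μ) ∧
    ∫ a, ((∑ k ∈ Finset.range (N + 1),
          (⟪M k (x k a), x k a⟫ + 2 * ⟪L k (x k a), u k a⟫ + ⟪R k (u k a), u k a⟫))
        + ⟪P (N + 1) (x (N + 1) a), x (N + 1) a⟫) ∂μ
      = ⟪P 0 x₀, x₀⟫ + ∑ k ∈ Finset.range (N + 1),
          ∫ a, ⟪Rcal k (u k a + Rinv k (G k (x k a))),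
                u k a + Rinv k (G k (x k a))⟫ ∂μ := by
  -- basic filtration facts
  have hFle : ∀ k, F k ≤ mΩ := by
    intro k; rw [hF k]
    exact iSup₂_le fun i _ => (hωmeas i).comap_le
  have hFmono : ∀ {j k : ℕ}, j ≤ k → F j ≤ F k := by
    intro j k hjk; rw [hF j, hF k]
    exact iSup₂_le fun i hi => le_iSup₂ (f := fun i _ => MeasurableSpace.comap (ω i) inferInstance)
      i (Finset.mem_range.mpr (lt_of_lt_of_le (Finset.mem_range.mp hi) hjk))
  have hcomapF : ∀ k, MeasurableSpace.comap (ω k) inferInstance ≤ F (k + 1) := by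
    intro k; rw [hF (k + 1)]
    exact le_iSup₂ (f := fun i _ => MeasurableSpace.comap (ω i) inferInstance)
      k (Finset.self_mem_range_succ k)
  have hωmeasF : ∀ k, Measurable[F (k + 1)] (ω k) :=
    fun k => Measurable.mono (Measurable.of_comap_le le_rfl) (hcomapF k) le_rfl
  -- trajectory properties
  have htraj : ∀ k, k ≤ N + 1 → StronglyMeasurable[F k] (x k) ∧ MemLp (x k) 2 μ := by
    intro k
    induction k with
    | zero =>
      intro _
      rw [hx0]
      exact ⟨stronglyMeasurable_const, memLp_const x₀⟩
    | succ k ih =>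
      intro hk
      have hkN : k ≤ N := Nat.lt_succ_iff.mp hk
      obtain ⟨hxm, hxL2⟩ := ih (le_trans (Nat.le_succ k) hk)
      have hum := humeas k hkN
      have huL := huL2 k hkN
      have hxeq : x (k + 1) = fun a =>
          (A k (x k a) + B k (u k a)) + ω k a • (C k (x k a) + D k (u k a)) := by
        funext a
        rw [hxrec k hkN a, add_assoc]
      have hfm : StronglyMeasurable[F k] (fun a => A k (x k a) + B k (u k a)) :=
        ((A k).continuous.comp_stronglyMeasurable hxm).add
          ((B k).continuous.comp_stronglyMeasurable hum)
      have hgm : StronglyMeasurable[F k] (fun a => C k (x k a) + D k (u k a)) :=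
        ((C k).continuous.comp_stronglyMeasurable hxm).add
          ((D k).continuous.comp_stronglyMeasurable hum)
      have hfL2 : MemLp (fun a => A k (x k a) + B k (u k a)) 2 μ :=
        ((A k).comp_memLp' hxL2).add ((B k).comp_memLp' huL)
      have hgL2 : MemLp (fun a => C k (x k a) + D k (u k a)) 2 μ :=
        ((C k).comp_memLp' hxL2).add ((D k).comp_memLp' huL)
      constructor
      · rw [hxeq]
        have h1 : StronglyMeasurable[F (k+1)] (fun a => A k (x k a) + B k (u k a)) :=
          hfm.mono (hFmono (Nat.le_succ k))
        have h2 : StronglyMeasurable[F (k+1)] (fun a => C k (x k a) + D k (u k a)) :=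
          hgm.mono (hFmono (Nat.le_succ k))
        exact h1.add (((hωmeasF k).stronglyMeasurable).smul h2)
      · rw [hxeq]
        exact hfL2.add (my_smul_memℒp (mΩ := mΩ) (hFle k) (hindep k)
          (hωmeas k) (hωL2 k) hgm hgL2)
  refine ⟨htraj, ?_⟩
  have hPx_int : ∀ n, n ≤ N + 1 → Integrable (fun a => ⟪P n (x n a), x n a⟫) μ := by
    intro n hn
    exact my_integrable_inner ((P n).comp_memLp' (htraj n hn).2) (htraj n hn).2
  have hcost_int : ∀ k, k ≤ N → Integrable (fun a =>
      ⟪M k (x k a), x k a⟫ + 2 * ⟪L k (x k a), u k a⟫ + ⟪R k (u k a), u k a⟫) μ := by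
    intro k hk
    have hk1 : k ≤ N + 1 := le_trans hk (Nat.le_succ N)
    have h1 : Integrable (fun a => ⟪M k (x k a), x k a⟫) μ :=
      my_integrable_inner ((M k).comp_memLp' (htraj k hk1).2) (htraj k hk1).2
    have h2 : Integrable (fun a => 2 * ⟪L k (x k a), u k a⟫) μ :=
      (my_integrable_inner ((L k).comp_memLp' (htraj k hk1).2) (huL2 k hk)).const_mul 2
    have h3 : Integrable (fun a => ⟪R k (u k a), u k a⟫) μ :=
      my_integrable_inner ((R k).comp_memLp' (huL2 k hk)) (huL2 k hk)
    exact (h1.add h2).add h3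
  have hstep : ∀ k, k ≤ N →
      ∫ a, ⟪P (k+1) (x (k+1) a), x (k+1) a⟫ ∂μ
        = ∫ a, (⟪P (k+1) (A k (x k a) + B k (u k a)), A k (x k a) + B k (u k a)⟫
            + ⟪P (k+1) (C k (x k a) + D k (u k a)), C k (x k a) + D k (u k a)⟫) ∂μ := by
    intro k hk
    have hk1 : k ≤ N + 1 := le_trans hk (Nat.le_succ N)
    obtain ⟨hxm, hxL2⟩ := htraj k hk1
    have hum := humeas k hk
    have huL := huL2 k hk
    set f : Ω → H := fun a => A k (x k a) + B k (u k a) with hf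
    set g : Ω → H := fun a => C k (x k a) + D k (u k a) with hgdef
    have hfm : StronglyMeasurable[F k] f :=
      ((A k).continuous.comp_stronglyMeasurable hxm).add
        ((B k).continuous.comp_stronglyMeasurable hum)
    have hgm : StronglyMeasurable[F k] g :=
      ((C k).continuous.comp_stronglyMeasurable hxm).add
        ((D k).continuous.comp_stronglyMeasurable hum)
    have hfL2 : MemLp f 2 μ := ((A k).comp_memLp' hxL2).add ((B k).comp_memLp' huL)
    have hgL2 : MemLp g 2 μ := ((C k).comp_memLp' hxL2).add ((D k).comp_memLp' huL)
    have hPfm : StronglyMeasurable[F k] (fun a => P (k+1) (f a)) :=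
      (P (k+1)).continuous.comp_stronglyMeasurable hfm
    have hPgm : StronglyMeasurable[F k] (fun a => P (k+1) (g a)) :=
      (P (k+1)).continuous.comp_stronglyMeasurable hgm
    have hφm : Measurable[F k] (fun a => 2 * ⟪P (k+1) (f a), g a⟫) :=
      ((hPfm.inner hgm).measurable).const_mul 2
    have hψm : Measurable[F k] (fun a => ⟪P (k+1) (g a), g a⟫) :=
      (hPgm.inner hgm).measurable
    have hφint : Integrable (fun a => 2 * ⟪P (k+1) (f a), g a⟫) μ :=
      (my_integrable_inner ((P (k+1)).comp_memLp' hfL2) hgL2).const_mul 2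
    have hψint : Integrable (fun a => ⟪P (k+1) (g a), g a⟫) μ :=
      my_integrable_inner ((P (k+1)).comp_memLp' hgL2) hgL2
    have hF1int : Integrable (fun a => ⟪P (k+1) (f a), f a⟫) μ :=
      my_integrable_inner ((P (k+1)).comp_memLp' hfL2) hfL2
    have hω1 := my_integral_mul (mΩ := mΩ) (ψ := fun r => r) (hindep k)
      measurable_id ((hωL2 k).integrable one_le_two) hφm hφint
    have hω2 := my_integral_mul (mΩ := mΩ) (ψ := fun r => r ^ 2) (hindep k)
      (measurable_id.pow_const 2) (hωL2 k).integrable_sq hψm hψint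
    have hω1i : Integrable (fun a => ω k a * (2 * ⟪P (k+1) (f a), g a⟫)) μ := hω1.1
    have hω2i : Integrable (fun a => (ω k a) ^ 2 * ⟪P (k+1) (g a), g a⟫) μ := hω2.1
    have hω1e : ∫ a, ω k a * (2 * ⟪P (k+1) (f a), g a⟫) ∂μ
        = (∫ a, ω k a ∂μ) * ∫ a, 2 * ⟪P (k+1) (f a), g a⟫ ∂μ := hω1.2
    have hω2e : ∫ a, (ω k a) ^ 2 * ⟪P (k+1) (g a), g a⟫ ∂μ
        = (∫ a, (ω k a) ^ 2 ∂μ) * ∫ a, ⟪P (k+1) (g a), g a⟫ ∂μ := hω2.2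
    have h12 : Integrable (fun a => ⟪P (k+1) (f a), f a⟫
        + ω k a * (2 * ⟪P (k+1) (f a), g a⟫)) μ := hF1int.add hω1i
    have hsplit1 : ∫ a, (⟪P (k+1) (f a), f a⟫ + ω k a * (2 * ⟪P (k+1) (f a), g a⟫)
          + (ω k a) ^ 2 * ⟪P (k+1) (g a), g a⟫) ∂μ
        = (∫ a, (⟪P (k+1) (f a), f a⟫ + ω k a * (2 * ⟪P (k+1) (f a), g a⟫)) ∂μ)
          + ∫ a, (ω k a) ^ 2 * ⟪P (k+1) (g a), g a⟫ ∂μ := integral_add h12 hω2i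
    have hsplit2 : ∫ a, (⟪P (k+1) (f a), f a⟫ + ω k a * (2 * ⟪P (k+1) (f a), g a⟫)) ∂μ
        = (∫ a, ⟪P (k+1) (f a), f a⟫ ∂μ)
          + ∫ a, ω k a * (2 * ⟪P (k+1) (f a), g a⟫) ∂μ := integral_add hF1int hω1i
    have hpt : ∀ a, ⟪P (k+1) (x (k+1) a), x (k+1) a⟫
        = ⟪P (k+1) (f a), f a⟫ + (ω k a) * (2 * ⟪P (k+1) (f a), g a⟫)
          + (ω k a) ^ 2 * ⟪P (k+1) (g a), g a⟫ := by
      intro a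
      rw [hxrec k hk a]
      exact my_expand (hPsa (k+1)) (ω k a) (f a) (g a)
    calc ∫ a, ⟪P (k+1) (x (k+1) a), x (k+1) a⟫ ∂μ
        = ∫ a, (⟪P (k+1) (f a), f a⟫ + (ω k a) * (2 * ⟪P (k+1) (f a), g a⟫)
            + (ω k a) ^ 2 * ⟪P (k+1) (g a), g a⟫) ∂μ :=
          integral_congr_ae (Filter.Eventually.of_forall fun a => hpt a)
      _ = (∫ a, ⟪P (k+1) (f a), f a⟫ ∂μ
            + ∫ a, (ω k a) * (2 * ⟪P (k+1) (f a), g a⟫) ∂μ)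
            + ∫ a, (ω k a) ^ 2 * ⟪P (k+1) (g a), g a⟫ ∂μ := by
          rw [hsplit1, hsplit2]
      _ = ∫ a, ⟪P (k+1) (f a), f a⟫ ∂μ + ∫ a, ⟪P (k+1) (g a), g a⟫ ∂μ := by
          rw [hω1e, hω2e, hmean k, hvar k]
          ring
      _ = ∫ a, (⟪P (k+1) (f a), f a⟫ + ⟪P (k+1) (g a), g a⟫) ∂μ :=
          (integral_add hF1int hψint).symm
  have hfgint : ∀ k, k ≤ N → Integrable (fun a =>
      ⟪P (k+1) (A k (x k a) + B k (u k a)), A k (x k a) + B k (u k a)⟫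
        + ⟪P (k+1) (C k (x k a) + D k (u k a)), C k (x k a) + D k (u k a)⟫) μ := by
    intro k hk
    have hk1 : k ≤ N + 1 := le_trans hk (Nat.le_succ N)
    have hfL2 : MemLp (fun a => A k (x k a) + B k (u k a)) 2 μ :=
      ((A k).comp_memLp' (htraj k hk1).2).add ((B k).comp_memLp' (huL2 k hk))
    have hgL2 : MemLp (fun a => C k (x k a) + D k (u k a)) 2 μ :=
      ((C k).comp_memLp' (htraj k hk1).2).add ((D k).comp_memLp' (huL2 k hk))
    exact (my_integrable_inner ((P (k+1)).comp_memLp' hfL2) hfL2).add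
      (my_integrable_inner ((P (k+1)).comp_memLp' hgL2) hgL2)
  have hQ : ∀ k, k ≤ N →
      (∫ a, (⟪M k (x k a), x k a⟫ + 2 * ⟪L k (x k a), u k a⟫
          + ⟪R k (u k a), u k a⟫) ∂μ)
        + (∫ a, ⟪P (k+1) (x (k+1) a), x (k+1) a⟫ ∂μ)
        - ∫ a, ⟪P k (x k a), x k a⟫ ∂μ
      = ∫ a, ⟪Rcal k (u k a + Rinv k (G k (x k a))),
              u k a + Rinv k (G k (x k a))⟫ ∂μ := by
    intro k hk
    have hk1 : k ≤ N + 1 := le_trans hk (Nat.le_succ N)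
    have haddint : Integrable (fun a =>
        (⟪M k (x k a), x k a⟫ + 2 * ⟪L k (x k a), u k a⟫ + ⟪R k (u k a), u k a⟫)
        + (⟪P (k+1) (A k (x k a) + B k (u k a)), A k (x k a) + B k (u k a)⟫
          + ⟪P (k+1) (C k (x k a) + D k (u k a)), C k (x k a) + D k (u k a)⟫)) μ :=
      (hcost_int k hk).add (hfgint k hk)
    have hadd : ∫ a, ((⟪M k (x k a), x k a⟫ + 2 * ⟪L k (x k a), u k a⟫
          + ⟪R k (u k a), u k a⟫)
        + (⟪P (k+1) (A k (x k a) + B k (u k a)), A k (x k a) + B k (u k a)⟫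
          + ⟪P (k+1) (C k (x k a) + D k (u k a)), C k (x k a) + D k (u k a)⟫)) ∂μ
        = (∫ a, (⟪M k (x k a), x k a⟫ + 2 * ⟪L k (x k a), u k a⟫
            + ⟪R k (u k a), u k a⟫) ∂μ)
          + ∫ a, (⟪P (k+1) (A k (x k a) + B k (u k a)), A k (x k a) + B k (u k a)⟫
            + ⟪P (k+1) (C k (x k a) + D k (u k a)), C k (x k a) + D k (u k a)⟫) ∂μ :=
      integral_add (hcost_int k hk) (hfgint k hk)
    have hsub : ∫ a, (((⟪M k (x k a), x k a⟫ + 2 * ⟪L k (x k a), u k a⟫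
          + ⟪R k (u k a), u k a⟫)
        + (⟪P (k+1) (A k (x k a) + B k (u k a)), A k (x k a) + B k (u k a)⟫
          + ⟪P (k+1) (C k (x k a) + D k (u k a)), C k (x k a) + D k (u k a)⟫))
        - ⟪P k (x k a), x k a⟫) ∂μ
        = (∫ a, ((⟪M k (x k a), x k a⟫ + 2 * ⟪L k (x k a), u k a⟫
            + ⟪R k (u k a), u k a⟫)
          + (⟪P (k+1) (A k (x k a) + B k (u k a)), A k (x k a) + B k (u k a)⟫
            + ⟪P (k+1) (C k (x k a) + D k (u k a)), C k (x k a) + D k (u k a)⟫)) ∂μ)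
          - ∫ a, ⟪P k (x k a), x k a⟫ ∂μ :=
      integral_sub haddint (hPx_int k hk1)
    rw [hstep k hk, ← hadd, ← hsub]
    refine integral_congr_ae (Filter.Eventually.of_forall fun a => ?_)
    have h := my_step_alg (hPsa (k+1)) (hRsa k) (hRcal k) (hG k) (hinv1 k hk)
      (hRic k hk) (x k a) (u k a)
    beta_reduce
    linarith
  have htel : ∀ n, n ≤ N + 1 →
      ∫ a, ((∑ k ∈ Finset.range n,
          (⟪M k (x k a), x k a⟫ + 2 * ⟪L k (x k a), u k a⟫ + ⟪R k (u k a), u k a⟫))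
          + ⟪P n (x n a), x n a⟫) ∂μ
        = ⟪P 0 x₀, x₀⟫ + ∑ k ∈ Finset.range n,
            ∫ a, ⟪Rcal k (u k a + Rinv k (G k (x k a))),
                  u k a + Rinv k (G k (x k a))⟫ ∂μ := by
    intro n
    induction n with
    | zero =>
      intro _
      simp only [Finset.range_zero, Finset.sum_empty, zero_add, add_zero, hx0]
      simp [integral_const]
    | succ n ih =>
      intro hn
      have hnN : n ≤ N := Nat.lt_succ_iff.mp hn
      have hn1 : n ≤ N + 1 := le_trans hnN (Nat.le_succ N)
      have ih' := ih hn1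
      have hint1 : Integrable (fun a => (∑ k ∈ Finset.range n,
          (⟪M k (x k a), x k a⟫ + 2 * ⟪L k (x k a), u k a⟫ + ⟪R k (u k a), u k a⟫))
          + ⟪P n (x n a), x n a⟫) μ := by
        refine (integrable_finset_sum _ fun k hk => ?_).add (hPx_int n hn1)
        exact hcost_int k (le_of_lt (lt_of_lt_of_le (Finset.mem_range.mp hk) hnN))
      have hint2 : Integrable (fun a =>
          (⟪M n (x n a), x n a⟫ + 2 * ⟪L n (x n a), u n a⟫ + ⟪R n (u n a), u n a⟫)
          + ⟪P (n+1) (x (n+1) a), x (n+1) a⟫ - ⟪P n (x n a), x n a⟫) μ :=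
        ((hcost_int n hnN).add (hPx_int (n+1) (Nat.succ_le_succ hnN))).sub (hPx_int n hn1)
      calc ∫ a, ((∑ k ∈ Finset.range (n+1),
            (⟪M k (x k a), x k a⟫ + 2 * ⟪L k (x k a), u k a⟫ + ⟪R k (u k a), u k a⟫))
            + ⟪P (n+1) (x (n+1) a), x (n+1) a⟫) ∂μ
          = ∫ a, (((∑ k ∈ Finset.range n,
              (⟪M k (x k a), x k a⟫ + 2 * ⟪L k (x k a), u k a⟫ + ⟪R k (u k a), u k a⟫))
              + ⟪P n (x n a), x n a⟫)
            + ((⟪M n (x n a), x n a⟫ + 2 * ⟪L n (x n a), u n a⟫ + ⟪R n (u n a), u n a⟫)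
              + ⟪P (n+1) (x (n+1) a), x (n+1) a⟫ - ⟪P n (x n a), x n a⟫)) ∂μ := by
            refine integral_congr_ae (Filter.Eventually.of_forall fun a => ?_)
            simp only [Finset.sum_range_succ]
            ring
        _ = (∫ a, ((∑ k ∈ Finset.range n,
              (⟪M k (x k a), x k a⟫ + 2 * ⟪L k (x k a), u k a⟫ + ⟪R k (u k a), u k a⟫))
              + ⟪P n (x n a), x n a⟫) ∂μ)
            + ∫ a, ((⟪M n (x n a), x n a⟫ + 2 * ⟪L n (x n a), u n a⟫
              + ⟪R n (u n a), u n a⟫)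
              + ⟪P (n+1) (x (n+1) a), x (n+1) a⟫ - ⟪P n (x n a), x n a⟫) ∂μ :=
            integral_add hint1 hint2
        _ = ⟪P 0 x₀, x₀⟫ + ∑ k ∈ Finset.range (n+1),
              ∫ a, ⟪Rcal k (u k a + Rinv k (G k (x k a))),
                    u k a + Rinv k (G k (x k a))⟫ ∂μ := by
            have haddint2 : Integrable (fun a =>
                (⟪M n (x n a), x n a⟫ + 2 * ⟪L n (x n a), u n a⟫
                  + ⟪R n (u n a), u n a⟫)
                + ⟪P (n+1) (x (n+1) a), x (n+1) a⟫) μ :=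
              (hcost_int n hnN).add (hPx_int (n+1) (Nat.succ_le_succ hnN))
            have hsub2 : ∫ a, ((⟪M n (x n a), x n a⟫ + 2 * ⟪L n (x n a), u n a⟫
                  + ⟪R n (u n a), u n a⟫)
                + ⟪P (n+1) (x (n+1) a), x (n+1) a⟫ - ⟪P n (x n a), x n a⟫) ∂μ
                = (∫ a, ((⟪M n (x n a), x n a⟫ + 2 * ⟪L n (x n a), u n a⟫
                    + ⟪R n (u n a), u n a⟫)
                  + ⟪P (n+1) (x (n+1) a), x (n+1) a⟫) ∂μ)
                  - ∫ a, ⟪P n (x n a), x n a⟫ ∂μ :=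
              integral_sub haddint2 (hPx_int n hn1)
            have hadd2 : ∫ a, ((⟪M n (x n a), x n a⟫ + 2 * ⟪L n (x n a), u n a⟫
                  + ⟪R n (u n a), u n a⟫)
                + ⟪P (n+1) (x (n+1) a), x (n+1) a⟫) ∂μ
                = (∫ a, (⟪M n (x n a), x n a⟫ + 2 * ⟪L n (x n a), u n a⟫
                    + ⟪R n (u n a), u n a⟫) ∂μ)
                  + ∫ a, ⟪P (n+1) (x (n+1) a), x (n+1) a⟫ ∂μ :=
              integral_add (hcost_int n hnN) (hPx_int (n+1) (Nat.succ_le_succ hnN))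
            rw [ih', hsub2, hadd2, Finset.sum_range_succ]
            have := hQ n hnN
            linarith
  exact htel (N + 1) le_rfl

/-- Optimal feedback (sufficiency part of Theorem 1): with each `ℛ(k)` positive, the
feedback control `u*(k) = −ℛ(k)⁻¹𝒢(k)x*(k)` (with `x*` its own closed-loop trajectory)
achieves `J(x₀,u*) = ⟪P(0)x₀,x₀⟫`, every admissible control `u` satisfies
`J(x₀,u) ≥ J(x₀,u*)`, and equality holds only if `u(k) = −ℛ(k)⁻¹𝒢(k)x(k) = u*(k)`
almost surely for all `k`. -/
theorem stmt_7 {H U : Type*}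
    [NormedAddCommGroup H] [InnerProductSpace ℝ H] [CompleteSpace H]
    [NormedAddCommGroup U] [InnerProductSpace ℝ U] [CompleteSpace U]
    {Ω : Type*} [MeasurableSpace Ω] (μ : Measure Ω) [IsProbabilityMeasure μ]
    (N : ℕ)
    (A C : ℕ → H →L[ℝ] H) (B D : ℕ → U →L[ℝ] H)
    (M : ℕ → H →L[ℝ] H) (hM : ∀ k, IsSelfAdjoint (M k))
    (S : H →L[ℝ] H) (hSsa : IsSelfAdjoint S)
    (L : ℕ → H →L[ℝ] U)
    (R : ℕ → U →L[ℝ] U) (hRsa : ∀ k, IsSelfAdjoint (R k))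
    (P : ℕ → H →L[ℝ] H) (hPsa : ∀ k, IsSelfAdjoint (P k)) (hPN : P (N + 1) = S)
    (Rcal : ℕ → U →L[ℝ] U) (G : ℕ → H →L[ℝ] U) (Rinv : ℕ → U →L[ℝ] U)
    (hRcal : ∀ k, Rcal k = R k + adjoint (B k) ∘L P (k+1) ∘L B k
        + adjoint (D k) ∘L P (k+1) ∘L D k)
    (hG : ∀ k, G k = L k + adjoint (B k) ∘L P (k+1) ∘L A k
        + adjoint (D k) ∘L P (k+1) ∘L C k)
    (hinv1 : ∀ k ≤ N, Rcal k ∘L Rinv k = ContinuousLinearMap.id ℝ U)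
    (hinv2 : ∀ k ≤ N, Rinv k ∘L Rcal k = ContinuousLinearMap.id ℝ U)
    (hRic : ∀ k ≤ N, P k = adjoint (A k) ∘L P (k+1) ∘L A k
        + adjoint (C k) ∘L P (k+1) ∘L C k + M k
        - adjoint (G k) ∘L Rinv k ∘L G k)
    (hRpos : ∀ k ≤ N, ∃ ϑ : ℝ, 0 < ϑ ∧ ∀ v : U, ϑ * ‖v‖ ^ 2 ≤ ⟪Rcal k v, v⟫)
    (ω : ℕ → Ω → ℝ) (hωmeas : ∀ k, Measurable (ω k))
    (hωL2 : ∀ k, MemLp (ω k) 2 μ)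
    (hmean : ∀ k, ∫ a, ω k a ∂μ = 0) (hvar : ∀ k, ∫ a, (ω k a) ^ 2 ∂μ = 1)
    (F : ℕ → MeasurableSpace Ω)
    (hF : ∀ k, F k = ⨆ i ∈ Finset.range k, MeasurableSpace.comap (ω i) inferInstance)
    (hindep : ∀ k, ProbabilityTheory.Indep
      (MeasurableSpace.comap (ω k) inferInstance) (F k) μ)
    (x₀ : H) (u : ℕ → Ω → U)
    (humeas : ∀ k, StronglyMeasurable[F k] (u k))
    (huL2 : ∀ k, MemLp (u k) 2 μ)
    (x : ℕ → Ω → H) (hx0 : x 0 = fun _ => x₀)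
    (hxrec : ∀ k ≤ N, ∀ a : Ω, x (k + 1) a =
        A k (x k a) + B k (u k a) + ω k a • (C k (x k a) + D k (u k a)))
    (ustar : ℕ → Ω → U) (xstar : ℕ → Ω → H)
    (hxstar0 : xstar 0 = fun _ => x₀)
    (hustar : ∀ k ≤ N, ∀ a : Ω, ustar k a = -(Rinv k (G k (xstar k a))))
    (hxstarrec : ∀ k ≤ N, ∀ a : Ω, xstar (k + 1) a =
        A k (xstar k a) + B k (ustar k a)
          + ω k a • (C k (xstar k a) + D k (ustar k a))) :
    (∫ a, ((∑ k ∈ Finset.range (N + 1),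
          (⟪M k (xstar k a), xstar k a⟫ + 2 * ⟪L k (xstar k a), ustar k a⟫
            + ⟪R k (ustar k a), ustar k a⟫))
        + ⟪S (xstar (N + 1) a), xstar (N + 1) a⟫) ∂μ = ⟪P 0 x₀, x₀⟫) ∧
    (∫ a, ((∑ k ∈ Finset.range (N + 1),
          (⟪M k (xstar k a), xstar k a⟫ + 2 * ⟪L k (xstar k a), ustar k a⟫
            + ⟪R k (ustar k a), ustar k a⟫))
        + ⟪S (xstar (N + 1) a), xstar (N + 1) a⟫) ∂μ ≤
      ∫ a, ((∑ k ∈ Finset.range (N + 1),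
          (⟪M k (x k a), x k a⟫ + 2 * ⟪L k (x k a), u k a⟫ + ⟪R k (u k a), u k a⟫))
        + ⟪S (x (N + 1) a), x (N + 1) a⟫) ∂μ) ∧
    ((∫ a, ((∑ k ∈ Finset.range (N + 1),
          (⟪M k (x k a), x k a⟫ + 2 * ⟪L k (x k a), u k a⟫ + ⟪R k (u k a), u k a⟫))
        + ⟪S (x (N + 1) a), x (N + 1) a⟫) ∂μ =
      ∫ a, ((∑ k ∈ Finset.range (N + 1),
          (⟪M k (xstar k a), xstar k a⟫ + 2 * ⟪L k (xstar k a), ustar k a⟫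
            + ⟪R k (ustar k a), ustar k a⟫))
        + ⟪S (xstar (N + 1) a), xstar (N + 1) a⟫) ∂μ) →
      ∀ k ≤ N, u k =ᵐ[μ] fun a => -(Rinv k (G k (x k a)))) := by
  subst hPN
  -- filtration facts
  have hFle : ∀ k, F k ≤ (inferInstance : MeasurableSpace Ω) := by
    intro k; rw [hF k]
    exact iSup₂_le fun i _ => (hωmeas i).comap_le
  have hFmono : ∀ {j k : ℕ}, j ≤ k → F j ≤ F k := by
    intro j k hjk; rw [hF j, hF k]
    exact iSup₂_le fun i hi => le_iSup₂ (f := fun i _ => MeasurableSpace.comap (ω i) inferInstance)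
      i (Finset.mem_range.mpr (lt_of_lt_of_le (Finset.mem_range.mp hi) hjk))
  have hcomapF : ∀ k, MeasurableSpace.comap (ω k) inferInstance ≤ F (k + 1) := by
    intro k; rw [hF (k + 1)]
    exact le_iSup₂ (f := fun i _ => MeasurableSpace.comap (ω i) inferInstance)
      k (Finset.self_mem_range_succ k)
  have hωmeasF : ∀ k, Measurable[F (k + 1)] (ω k) :=
    fun k => Measurable.mono (Measurable.of_comap_le le_rfl) (hcomapF k) le_rfl
  -- closed-loop trajectory properties
  have hstar : ∀ k, k ≤ N + 1 → StronglyMeasurable[F k] (xstar k) ∧ MemLp (xstar k) 2 μ := by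
    intro k
    induction k with
    | zero =>
      intro _
      rw [hxstar0]
      exact ⟨stronglyMeasurable_const, memLp_const x₀⟩
    | succ k ih =>
      intro hk
      have hkN : k ≤ N := Nat.lt_succ_iff.mp hk
      obtain ⟨hxm, hxL2⟩ := ih (le_trans (Nat.le_succ k) hk)
      have hueq : ustar k = fun a => -(Rinv k (G k (xstar k a))) :=
        funext fun a => hustar k hkN a
      have hum : StronglyMeasurable[F k] (ustar k) := by
        rw [hueq]
        exact (((Rinv k).comp (G k)).continuous.comp_stronglyMeasurable hxm).neg
      have huL : MemLp (ustar k) 2 μ := by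
        rw [hueq]
        exact (((Rinv k).comp (G k)).comp_memLp' hxL2).neg
      have hxeq : xstar (k + 1) = fun a =>
          (A k (xstar k a) + B k (ustar k a)) + ω k a • (C k (xstar k a) + D k (ustar k a)) := by
        funext a
        rw [hxstarrec k hkN a, add_assoc]
      have hfm : StronglyMeasurable[F k] (fun a => A k (xstar k a) + B k (ustar k a)) :=
        ((A k).continuous.comp_stronglyMeasurable hxm).add
          ((B k).continuous.comp_stronglyMeasurable hum)
      have hgm : StronglyMeasurable[F k] (fun a => C k (xstar k a) + D k (ustar k a)) :=
        ((C k).continuous.comp_stronglyMeasurable hxm).add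
          ((D k).continuous.comp_stronglyMeasurable hum)
      have hfL2 : MemLp (fun a => A k (xstar k a) + B k (ustar k a)) 2 μ :=
        ((A k).comp_memLp' hxL2).add ((B k).comp_memLp' huL)
      have hgL2 : MemLp (fun a => C k (xstar k a) + D k (ustar k a)) 2 μ :=
        ((C k).comp_memLp' hxL2).add ((D k).comp_memLp' huL)
      constructor
      · rw [hxeq]
        exact (hfm.mono (hFmono (Nat.le_succ k))).add
          (((hωmeasF k).stronglyMeasurable).smul (hgm.mono (hFmono (Nat.le_succ k))))
      · rw [hxeq]
        exact hfL2.add (my_smul_memℒp (hFle k) (hindep k) (hωmeas k) (hωL2 k) hgm hgL2)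
  have hustarm : ∀ k, k ≤ N → StronglyMeasurable[F k] (ustar k) := by
    intro k hk
    rw [funext fun a => hustar k hk a]
    exact (((Rinv k).comp (G k)).continuous.comp_stronglyMeasurable
      (hstar k (le_trans hk (Nat.le_succ N))).1).neg
  have hustarL2 : ∀ k, k ≤ N → MemLp (ustar k) 2 μ := by
    intro k hk
    rw [funext fun a => hustar k hk a]
    exact (((Rinv k).comp (G k)).comp_memLp'
      (hstar k (le_trans hk (Nat.le_succ N))).2).neg
  -- apply the key identity to both trajectories
  have keyU := my_key μ N A C B D M L R hRsa P hPsa Rcal G Rinv hRcal hG hinv1 hRic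
    ω hωmeas hωL2 hmean hvar F hF hindep x₀ u (fun k _ => humeas k) (fun k _ => huL2 k) x hx0 hxrec
  have keyS := my_key μ N A C B D M L R hRsa P hPsa Rcal G Rinv hRcal hG hinv1 hRic
    ω hωmeas hωL2 hmean hvar F hF hindep x₀ ustar hustarm hustarL2 xstar hxstar0 hxstarrec
  -- the star cost terms vanish
  have hzero : ∀ k ∈ Finset.range (N + 1),
      ∫ a, ⟪Rcal k (ustar k a + Rinv k (G k (xstar k a))),
            ustar k a + Rinv k (G k (xstar k a))⟫ ∂μ = 0 := by
    intro k hk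
    have hkN : k ≤ N := Nat.lt_succ_iff.mp (Finset.mem_range.mp hk)
    have hv0 : ∀ a : Ω, ustar k a + Rinv k (G k (xstar k a)) = 0 := by
      intro a
      rw [hustar k hkN a]
      exact neg_add_cancel _
    calc ∫ a, ⟪Rcal k (ustar k a + Rinv k (G k (xstar k a))),
            ustar k a + Rinv k (G k (xstar k a))⟫ ∂μ
        = ∫ _a, (0 : ℝ) ∂μ := by
          refine integral_congr_ae (Filter.Eventually.of_forall fun a => ?_)
          simp [hv0 a]
      _ = 0 := integral_zero Ω ℝ
  have hJstar : ∫ a, ((∑ k ∈ Finset.range (N + 1),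
        (⟪M k (xstar k a), xstar k a⟫ + 2 * ⟪L k (xstar k a), ustar k a⟫
          + ⟪R k (ustar k a), ustar k a⟫))
      + ⟪P (N + 1) (xstar (N + 1) a), xstar (N + 1) a⟫) ∂μ = ⟪P 0 x₀, x₀⟫ := by
    rw [keyS.2, Finset.sum_eq_zero hzero, add_zero]
  have hQnonneg : ∀ k ∈ Finset.range (N + 1),
      0 ≤ ∫ a, ⟪Rcal k (u k a + Rinv k (G k (x k a))),
            u k a + Rinv k (G k (x k a))⟫ ∂μ := by
    intro k hk
    have hkN : k ≤ N := Nat.lt_succ_iff.mp (Finset.mem_range.mp hk)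
    obtain ⟨t, ht, hineq⟩ := hRpos k hkN
    refine integral_nonneg fun a => ?_
    exact le_trans (mul_nonneg ht.le (sq_nonneg _)) (hineq _)
  refine ⟨hJstar, ?_, ?_⟩
  · rw [hJstar, keyU.2]
    exact le_add_of_nonneg_right (Finset.sum_nonneg hQnonneg)
  · intro heq k hk
    rw [hJstar] at heq
    rw [keyU.2] at heq
    have hsum0 : ∑ k ∈ Finset.range (N + 1),
        ∫ a, ⟪Rcal k (u k a + Rinv k (G k (x k a))),
              u k a + Rinv k (G k (x k a))⟫ ∂μ = 0 := by linarith
    have hQ0 := (Finset.sum_eq_zero_iff_of_nonneg hQnonneg).mp hsum0 k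
      (Finset.mem_range.mpr (Nat.lt_succ_of_le hk))
    -- positivity forces the control to be the feedback a.e.
    have hk1 : k ≤ N + 1 := le_trans hk (Nat.le_succ N)
    have hvL2 : MemLp (fun a => u k a + Rinv k (G k (x k a))) 2 μ :=
      (huL2 k).add (((Rinv k).comp (G k)).comp_memLp' (keyU.1 k hk1).2)
    have hRvint : Integrable (fun a => ⟪Rcal k (u k a + Rinv k (G k (x k a))),
        u k a + Rinv k (G k (x k a))⟫) μ :=
      my_integrable_inner ((Rcal k).comp_memLp' hvL2) hvL2
    have hnint : Integrable (fun a => ‖u k a + Rinv k (G k (x k a))‖ ^ 2) μ :=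
      hvL2.norm.integrable_sq
    obtain ⟨t, ht, hineq⟩ := hRpos k hk
    have hmono : ∫ a, t * ‖u k a + Rinv k (G k (x k a))‖ ^ 2 ∂μ
        ≤ ∫ a, ⟪Rcal k (u k a + Rinv k (G k (x k a))),
            u k a + Rinv k (G k (x k a))⟫ ∂μ :=
      integral_mono (hnint.const_mul t) hRvint fun a => hineq _
    rw [hQ0, integral_const_mul] at hmono
    have hn0 : ∫ a, ‖u k a + Rinv k (G k (x k a))‖ ^ 2 ∂μ = 0 := by
      have hge : 0 ≤ ∫ a, ‖u k a + Rinv k (G k (x k a))‖ ^ 2 ∂μ :=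
        integral_nonneg fun a => sq_nonneg _
      nlinarith
    have hae : (fun a => ‖u k a + Rinv k (G k (x k a))‖ ^ 2) =ᵐ[μ] 0 :=
      (integral_eq_zero_iff_of_nonneg (fun a => sq_nonneg _) hnint).mp hn0
    filter_upwards [hae] with a ha
    have : ‖u k a + Rinv k (G k (x k a))‖ ^ 2 = 0 := ha
    have hz : u k a + Rinv k (G k (x k a)) = 0 := by
      rwa [pow_eq_zero_iff (two_ne_zero), norm_eq_zero] at this
    exact eq_neg_of_add_eq_zero_left hz
end

section
/- (One-step Riccati preservation of nonnegativity, key step of Theorem 2) Let H, U be real Hilbert spaces, A, C ∈ L(H), B, D ∈ L(U,H), M ∈ L(H) and R ∈ L(U) self-adjoint with R positive, L ∈ L(H,U), and suppose the block operator Ψ = [[M, L*],[L, R]] on H × U is nonnegative. If P ∈ L(H) is self-adjoint and nonnegative, then ℛ := R + B*PB + D*PD is positive (hence boundedly invertible), and the Riccati update Π(P) := A*PA + C*PC + M − (L* + A*PB + C*PD) ℛ⁻¹ (L + B*PA + D*PC) is a nonnegative self-adjoint operator on H. -/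
/-!
Write `ℛ = R + B*PB + D*PD` and `S = L + B*PA + D*PC`. Expanding
`⟪P(Ax + Bu), Ax + Bu⟫ + ⟪P(Cx + Du), Cx + Du⟫ ≥ 0` shows that the block operator
`[[A*PA + C*PC + M, S*], [S, ℛ]]` is again nonnegative, and its lower right corner dominates
`R`, so it is coercive and invertible by Lax–Milgram. The Riccati update is the Schur complement
of `ℛ` in this block operator, and evaluating the quadratic form of the block operator at
`(x, -ℛ⁻¹Sx)` gives exactly `⟪Π(P)x, x⟫`.
-/

open scoped RealInnerProductSpace
open ContinuousLinearMap

theorem IsSelfAdjoint.of_mul_eq_one {R : Type*} [Monoid R] [StarMul R] {a b : R}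
    (ha : IsSelfAdjoint a) (hab : a * b = 1) (hba : b * a = 1) : IsSelfAdjoint b :=
  let _ : Invertible a := ⟨b, hba, hab⟩
  (IsSelfAdjoint.invOf_iff a).2 ha

section

variable {H U K : Type*} [NormedAddCommGroup H] [InnerProductSpace ℝ H]
  [NormedAddCommGroup U] [InnerProductSpace ℝ U] [NormedAddCommGroup K] [InnerProductSpace ℝ K]

/-- The quadratic form of the block operator `[[Q, S*], [S, T]]` on `H × U` is nonnegative. -/
def BlockFormNonneg (Q : H →L[ℝ] H) (S : H →L[ℝ] U) (T : U →L[ℝ] U) : Prop :=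
  ∀ (x : H) (u : U), 0 ≤ ⟪Q x, x⟫ + 2 * ⟪S x, u⟫ + ⟪T u, u⟫

namespace BlockFormNonneg

theorem add {Q₁ Q₂ : H →L[ℝ] H} {S₁ S₂ : H →L[ℝ] U} {T₁ T₂ : U →L[ℝ] U}
    (h₁ : BlockFormNonneg Q₁ S₁ T₁) (h₂ : BlockFormNonneg Q₂ S₂ T₂) :
    BlockFormNonneg (Q₁ + Q₂) (S₁ + S₂) (T₁ + T₂) := by
  intro x u
  simp only [add_apply, inner_add_left]
  linarith [h₁ x u, h₂ x u]

theorem inner_schur_complement_nonneg {Q : H →L[ℝ] H} {S : H →L[ℝ] U} {T Tinv : U →L[ℝ] U}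
    [CompleteSpace H] [CompleteSpace U]
    (h : BlockFormNonneg Q S T) (hTinv : T ∘L Tinv = .id ℝ U) (x : H) :
    0 ≤ ⟪(Q - adjoint S ∘L Tinv ∘L S) x, x⟫ := by
  set y := Tinv (S x)
  have hTy : T y = S x := by simpa using congr($hTinv (S x))
  have hform := h x (-y)
  rw [inner_neg_right, map_neg, inner_neg_neg, hTy] at hform
  have hschur : ⟪(Q - adjoint S ∘L Tinv ∘L S) x, x⟫ = ⟪Q x, x⟫ - ⟪S x, y⟫ := by
    rw [sub_apply, inner_sub_left, comp_apply, comp_apply, adjoint_inner_left,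
      real_inner_comm (S x) y]
  linarith

end BlockFormNonneg

theorem blockFormNonneg_adjoint_conj [CompleteSpace H] [CompleteSpace U] [CompleteSpace K]
    {P : K →L[ℝ] K} (hP : P.IsPositive) (T : H →L[ℝ] K) (V : U →L[ℝ] K) :
    BlockFormNonneg (adjoint T ∘L P ∘L T) (adjoint V ∘L P ∘L T) (adjoint V ∘L P ∘L V) := by
  intro x u
  have hcross : ⟪P (V u), T x⟫ = ⟪P (T x), V u⟫ := by
    rw [hP.inner_left_eq_inner_right, real_inner_comm]
  have hsq := hP.inner_nonneg_left (T x + V u)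
  simp only [map_add, inner_add_left, inner_add_right, hcross] at hsq
  simp only [comp_apply, adjoint_inner_left]
  linarith

theorem exists_continuousLinearEquiv_of_coercive [CompleteSpace U] {T : U →L[ℝ] U}
    {ε : ℝ} (hε : 0 < ε) (hT : ∀ u, ε * ‖u‖ ^ 2 ≤ ⟪T u, u⟫) :
    ∃ E : U ≃L[ℝ] U, (E : U →L[ℝ] U) = T := by
  have hcoercive : IsCoercive ((innerSL ℝ).comp T) :=
    ⟨ε, hε, fun u => by simpa [sq, mul_assoc] using hT u⟩
  refine ⟨hcoercive.continuousLinearEquivOfBilin, ext fun v => ext_inner_right ℝ fun w => ?_⟩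
  simp [hcoercive.continuousLinearEquivOfBilin_apply]

end

/-- One-step Riccati preservation of nonnegativity (key step of Theorem 2): if `R` is
positive, the block operator `Ψ = [[M, L*],[L, R]]` on `H × U` is nonnegative (expressed
via its quadratic form `⟪Mx,x⟫ + 2⟪Lx,u⟫ + ⟪Ru,u⟫`), and `P ≥ 0` is self-adjoint, then
`ℛ = R + B*PB + D*PD` is positive (hence boundedly invertible), and the Riccati update
`Π(P) = A*PA + C*PC + M − (L* + A*PB + C*PD)ℛ⁻¹(L + B*PA + D*PC)` is a nonnegative
self-adjoint operator on `H`. -/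
theorem stmt_8 {H U : Type*} [NormedAddCommGroup H] [InnerProductSpace ℝ H] [CompleteSpace H]
    [NormedAddCommGroup U] [InnerProductSpace ℝ U] [CompleteSpace U]
    (A C : H →L[ℝ] H) (B D : U →L[ℝ] H)
    (M : H →L[ℝ] H) (hM : IsSelfAdjoint M)
    (R : U →L[ℝ] U) (hR : IsSelfAdjoint R)
    (ϑ : ℝ) (hϑ : 0 < ϑ) (hRpos : ∀ u : U, ϑ * ‖u‖ ^ 2 ≤ ⟪R u, u⟫)
    (L : H →L[ℝ] U)
    (hΨ : ∀ (x : H) (u : U), 0 ≤ ⟪M x, x⟫ + 2 * ⟪L x, u⟫ + ⟪R u, u⟫)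
    (P : H →L[ℝ] H) (hPsa : IsSelfAdjoint P) (hP : ∀ x : H, 0 ≤ ⟪P x, x⟫) :
    (∃ ε : ℝ, 0 < ε ∧ ∀ u : U,
        ε * ‖u‖ ^ 2 ≤ ⟪(R + adjoint B ∘L P ∘L B + adjoint D ∘L P ∘L D) u, u⟫) ∧
    (∃ Rinv : U →L[ℝ] U,
        (R + adjoint B ∘L P ∘L B + adjoint D ∘L P ∘L D) ∘L Rinv =
          ContinuousLinearMap.id ℝ U ∧
        Rinv ∘L (R + adjoint B ∘L P ∘L B + adjoint D ∘L P ∘L D) =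
          ContinuousLinearMap.id ℝ U) ∧
    (∀ Rinv : U →L[ℝ] U,
      (R + adjoint B ∘L P ∘L B + adjoint D ∘L P ∘L D) ∘L Rinv =
          ContinuousLinearMap.id ℝ U →
      Rinv ∘L (R + adjoint B ∘L P ∘L B + adjoint D ∘L P ∘L D) =
          ContinuousLinearMap.id ℝ U →
      IsSelfAdjoint
        (adjoint A ∘L P ∘L A + adjoint C ∘L P ∘L C + M
          - (adjoint L + adjoint A ∘L P ∘L B + adjoint C ∘L P ∘L D) ∘L Rinv
              ∘L (L + adjoint B ∘L P ∘L A + adjoint D ∘L P ∘L C)) ∧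
      ∀ x : H,
        0 ≤ ⟪(adjoint A ∘L P ∘L A + adjoint C ∘L P ∘L C + M
          - (adjoint L + adjoint A ∘L P ∘L B + adjoint C ∘L P ∘L D) ∘L Rinv
              ∘L (L + adjoint B ∘L P ∘L A + adjoint D ∘L P ∘L C)) x, x⟫) := by
  have hPpos : P.IsPositive := (isPositive_iff' P).2 ⟨hPsa, hP⟩
  have hcoercive :
      ∀ u, ϑ * ‖u‖ ^ 2 ≤ ⟪(R + adjoint B ∘L P ∘L B + adjoint D ∘L P ∘L D) u, u⟫ := by
    intro u
    simp only [add_apply, inner_add_left]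
    linarith [hRpos u, (hPpos.adjoint_conj B).inner_nonneg_left u,
      (hPpos.adjoint_conj D).inner_nonneg_left u]
  have hgain : adjoint L + adjoint A ∘L P ∘L B + adjoint C ∘L P ∘L D
      = adjoint (L + adjoint B ∘L P ∘L A + adjoint D ∘L P ∘L C) := by
    simp [adjoint_comp, hPsa.adjoint_eq, comp_assoc]
  have hblock : BlockFormNonneg (adjoint A ∘L P ∘L A + adjoint C ∘L P ∘L C + M)
      (L + adjoint B ∘L P ∘L A + adjoint D ∘L P ∘L C)
      (R + adjoint B ∘L P ∘L B + adjoint D ∘L P ∘L D) := by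
    have h := ((show BlockFormNonneg M L R from hΨ).add
      (blockFormNonneg_adjoint_conj hPpos A B)).add (blockFormNonneg_adjoint_conj hPpos C D)
    convert h using 1
    abel
  refine ⟨⟨ϑ, hϑ, hcoercive⟩, ?_, fun Rinv hright hleft => ⟨?_, ?_⟩⟩
  · obtain ⟨E, hE⟩ := exists_continuousLinearEquiv_of_coercive hϑ hcoercive
    exact ⟨E.symm, hE ▸ E.coe_comp_coe_symm, hE ▸ E.coe_symm_comp_coe⟩
  · have hRinv : IsSelfAdjoint Rinv :=
      ((hR.add (hPpos.adjoint_conj B).isSelfAdjoint).add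
        (hPpos.adjoint_conj D).isSelfAdjoint).of_mul_eq_one hright hleft
    rw [hgain]
    exact (((hPpos.adjoint_conj A).isSelfAdjoint.add (hPpos.adjoint_conj C).isSelfAdjoint).add
      hM).sub (hRinv.adjoint_conj _)
  · rw [hgain]
    exact hblock.inner_schur_complement_nonneg hright
end

section
/- (Theorem 2) Suppose S(N+1) ≥ 0, R(k) is positive for each k ∈ {0,…,N}, and the block operator Ψ_k = [[M(k), L(k)*],[L(k), R(k)]] on H × U is nonnegative for each k. Then the backward Riccati operator equation P(k) = Π_k(P(k+1)), P(N+1) = S(N+1), admits a solution {P(k)} with P(k) ≥ 0 for all k ∈ {0,…,N+1}, and each ℛ(k) = R(k) + B(k)*P(k+1)B(k) + D(k)*P(k+1)D(k) is positive. -/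
open scoped RealInnerProductSpace
open ContinuousLinearMap

set_option maxHeartbeats 1000000
set_option synthInstance.maxHeartbeats 400000

section Step
variable {H U : Type*} [NormedAddCommGroup H] [InnerProductSpace ℝ H] [CompleteSpace H]
    [NormedAddCommGroup U] [InnerProductSpace ℝ U] [CompleteSpace U]

lemma conj_selfAdjoint {E F : Type*} [NormedAddCommGroup E] [InnerProductSpace ℝ E]
    [CompleteSpace E] [NormedAddCommGroup F] [InnerProductSpace ℝ F] [CompleteSpace F]
    (Z : E →L[ℝ] F) (W : F →L[ℝ] F) (hW : IsSelfAdjoint W) :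
    IsSelfAdjoint (adjoint Z ∘L W ∘L Z) := by
  rw [isSelfAdjoint_iff', adjoint_comp, adjoint_comp, adjoint_adjoint, hW.adjoint_eq, comp_assoc]

lemma riccati_step (A C : H →L[ℝ] H) (B D : U →L[ℝ] H)
    (M : H →L[ℝ] H) (hM : IsSelfAdjoint M)
    (L : H →L[ℝ] U) (R : U →L[ℝ] U) (hRsa : IsSelfAdjoint R)
    (ϑ : ℝ) (hϑ : 0 < ϑ) (hR : ∀ u : U, ϑ * ‖u‖ ^ 2 ≤ ⟪R u, u⟫)
    (hΨ : ∀ (x : H) (u : U), 0 ≤ ⟪M x, x⟫ + 2 * ⟪L x, u⟫ + ⟪R u, u⟫)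
    (X : H →L[ℝ] H) (hXsa : IsSelfAdjoint X) (hXpos : ∀ x : H, 0 ≤ ⟪X x, x⟫) :
    ∃ Rinv : U →L[ℝ] U,
      (∀ u : U, ϑ * ‖u‖ ^ 2 ≤ ⟪(R + adjoint B ∘L X ∘L B + adjoint D ∘L X ∘L D) u, u⟫) ∧
      (R + adjoint B ∘L X ∘L B + adjoint D ∘L X ∘L D) ∘L Rinv = ContinuousLinearMap.id ℝ U ∧
      Rinv ∘L (R + adjoint B ∘L X ∘L B + adjoint D ∘L X ∘L D) = ContinuousLinearMap.id ℝ U ∧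
      IsSelfAdjoint (adjoint A ∘L X ∘L A + adjoint C ∘L X ∘L C + M
        - (adjoint L + adjoint A ∘L X ∘L B + adjoint C ∘L X ∘L D) ∘L Rinv
          ∘L (L + adjoint B ∘L X ∘L A + adjoint D ∘L X ∘L C)) ∧
      (∀ x : H, 0 ≤ ⟪(adjoint A ∘L X ∘L A + adjoint C ∘L X ∘L C + M
        - (adjoint L + adjoint A ∘L X ∘L B + adjoint C ∘L X ∘L D) ∘L Rinv
          ∘L (L + adjoint B ∘L X ∘L A + adjoint D ∘L X ∘L C)) x, x⟫) := by
  have hXsym : ∀ (v w : H), ⟪X v, w⟫ = ⟪X w, v⟫ := by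
    intro v w
    rw [isSelfAdjoint_iff'] at hXsa
    conv_lhs => rw [← hXsa]
    rw [adjoint_inner_left, real_inner_comm]
  set T : U →L[ℝ] U := R + adjoint B ∘L X ∘L B + adjoint D ∘L X ∘L D with hT
  have hTapp : ∀ u : U, ⟪T u, u⟫ = ⟪R u, u⟫ + ⟪X (B u), B u⟫ + ⟪X (D u), D u⟫ := by
    intro u
    simp [hT, inner_add_left, adjoint_inner_left]
  have hTcoer : ∀ u : U, ϑ * ‖u‖ ^ 2 ≤ ⟪T u, u⟫ := by
    intro u
    rw [hTapp]
    have h1 := hXpos (B u); have h2 := hXpos (D u)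
    have := hR u; linarith
  have hTsa : IsSelfAdjoint T := by
    rw [isSelfAdjoint_iff'] at hRsa hXsa ⊢
    simp [hT, map_add, adjoint_comp, adjoint_adjoint, hRsa, hXsa, comp_assoc]
  -- Lax-Milgram
  have hcoer : IsCoercive ((innerSL ℝ).comp T) := by
    refine ⟨ϑ, hϑ, fun u => ?_⟩
    have := hTcoer u
    simpa [pow_two, mul_assoc] using this
  set e := hcoer.continuousLinearEquivOfBilin with he
  have heT : ∀ u : U, e u = T u := by
    intro u
    apply ext_inner_right ℝ
    intro v
    rw [hcoer.continuousLinearEquivOfBilin_apply]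
    simp
  set Rinv : U →L[ℝ] U := (e.symm : U →L[ℝ] U) with hRinv
  have h1 : T ∘L Rinv = ContinuousLinearMap.id ℝ U := by
    ext u; simp [hRinv, ← heT]
  have h2 : Rinv ∘L T = ContinuousLinearMap.id ℝ U := by
    ext u; simp [hRinv, ← heT]
  have hRinvsa : IsSelfAdjoint Rinv := by
    rw [isSelfAdjoint_iff']
    have : adjoint Rinv ∘L (T ∘L Rinv) = adjoint Rinv := by rw [h1]; ext u; simp
    calc adjoint Rinv = adjoint Rinv ∘L (T ∘L Rinv) := this.symm
      _ = (adjoint Rinv ∘L T) ∘L Rinv := by rw [comp_assoc]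
      _ = (adjoint Rinv ∘L adjoint T) ∘L Rinv := by rw [hTsa.adjoint_eq]
      _ = adjoint (T ∘L Rinv) ∘L Rinv := by rw [adjoint_comp]
      _ = Rinv := by rw [h1]; ext u; simp [ContinuousLinearMap.adjoint_id]
  have hKadj : adjoint L + adjoint A ∘L X ∘L B + adjoint C ∘L X ∘L D
      = adjoint (L + adjoint B ∘L X ∘L A + adjoint D ∘L X ∘L C) := by
    simp [map_add, adjoint_comp, adjoint_adjoint, hXsa.adjoint_eq, comp_assoc]
  refine ⟨Rinv, hTcoer, h1, h2, ?_, ?_⟩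
  · rw [hKadj]
    exact (((conj_selfAdjoint A X hXsa).add (conj_selfAdjoint C X hXsa)).add hM).sub
      (conj_selfAdjoint _ Rinv hRinvsa)
  · intro x
    set 𝕃 : H →L[ℝ] U := L + adjoint B ∘L X ∘L A + adjoint D ∘L X ∘L C with h𝕃
    set u : U := -(Rinv (𝕃 x)) with hu
    have hTu : T u = -(𝕃 x) := by
      have := DFunLike.congr_fun h1 (𝕃 x)
      simp only [comp_apply, ContinuousLinearMap.id_apply] at this
      rw [hu, map_neg, this]
    have hLHS : ⟪(adjoint A ∘L X ∘L A + adjoint C ∘L X ∘L C + M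
        - (adjoint L + adjoint A ∘L X ∘L B + adjoint C ∘L X ∘L D) ∘L Rinv
          ∘L (L + adjoint B ∘L X ∘L A + adjoint D ∘L X ∘L C)) x, x⟫
        = ⟪X (A x), A x⟫ + ⟪X (C x), C x⟫ + ⟪M x, x⟫ - ⟪Rinv (𝕃 x), 𝕃 x⟫ := by
      rw [hKadj]
      simp only [← h𝕃, sub_apply, add_apply, comp_apply, inner_sub_left, inner_add_left,
        adjoint_inner_left]
    have hlu : ⟪𝕃 x, u⟫ = ⟪L x, u⟫ + ⟪X (A x), B u⟫ + ⟪X (C x), D u⟫ := by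
      rw [h𝕃]
      simp [inner_add_left, adjoint_inner_left]
    have hTuu : ⟪T u, u⟫ = ⟪R u, u⟫ + ⟪X (B u), B u⟫ + ⟪X (D u), D u⟫ := hTapp u
    have hTul : ⟪T u, u⟫ = ⟪𝕃 x, Rinv (𝕃 x)⟫ := by
      rw [hTu, hu, inner_neg_neg]
    have hlu2 : ⟪𝕃 x, u⟫ = -⟪𝕃 x, Rinv (𝕃 x)⟫ := by
      rw [hu, inner_neg_right]
    have hcomm : ⟪Rinv (𝕃 x), 𝕃 x⟫ = ⟪𝕃 x, Rinv (𝕃 x)⟫ := real_inner_comm _ _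
    have expand1 : ⟪X (A x + B u), A x + B u⟫
        = ⟪X (A x), A x⟫ + 2 * ⟪X (A x), B u⟫ + ⟪X (B u), B u⟫ := by
      have hsym := hXsym (B u) (A x)
      simp only [map_add, inner_add_left, inner_add_right, hsym]
      ring
    have expand2 : ⟪X (C x + D u), C x + D u⟫
        = ⟪X (C x), C x⟫ + 2 * ⟪X (C x), D u⟫ + ⟪X (D u), D u⟫ := by
      have hsym := hXsym (D u) (C x)
      simp only [map_add, inner_add_left, inner_add_right, hsym]
      ring
    have hpos1 := hXpos (A x + B u)
    have hpos2 := hXpos (C x + D u)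
    have hpsi := hΨ x u
    rw [hLHS]
    linarith

end Step

/-- Theorem 2: if `S(N+1) ≥ 0`, each `R(k)` is positive, and each block operator
`Ψ_k = [[M(k), L(k)*],[L(k), R(k)]]` on `H × U` is nonnegative (expressed via its
quadratic form), then the backward Riccati operator equation `P(k) = Π_k(P(k+1))`,
`P(N+1) = S(N+1)`, admits a solution `{P(k)}` with `P(k) ≥ 0` for all `k ≤ N+1`,
and each `ℛ(k) = R(k) + B(k)*P(k+1)B(k) + D(k)*P(k+1)D(k)` is positive (with bounded
inverse `Rinv k` appearing in the Riccati recursion). -/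
theorem stmt_9 {H U : Type*} [NormedAddCommGroup H] [InnerProductSpace ℝ H] [CompleteSpace H]
    [NormedAddCommGroup U] [InnerProductSpace ℝ U] [CompleteSpace U]
    (N : ℕ) (A C : ℕ → H →L[ℝ] H) (B D : ℕ → U →L[ℝ] H)
    (M : ℕ → H →L[ℝ] H) (hM : ∀ k, IsSelfAdjoint (M k))
    (S : H →L[ℝ] H) (hSsa : IsSelfAdjoint S) (hS : ∀ x : H, 0 ≤ ⟪S x, x⟫)
    (L : ℕ → H →L[ℝ] U)
    (R : ℕ → U →L[ℝ] U) (hRsa : ∀ k, IsSelfAdjoint (R k))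
    (hRpos : ∀ k ≤ N, ∃ ϑ : ℝ, 0 < ϑ ∧ ∀ u : U, ϑ * ‖u‖ ^ 2 ≤ ⟪R k u, u⟫)
    (hΨ : ∀ k ≤ N, ∀ (x : H) (u : U),
      0 ≤ ⟪M k x, x⟫ + 2 * ⟪L k x, u⟫ + ⟪R k u, u⟫) :
    ∃ (P : ℕ → H →L[ℝ] H) (Rinv : ℕ → U →L[ℝ] U),
      (∀ k ≤ N + 1, IsSelfAdjoint (P k)) ∧
      P (N + 1) = S ∧
      (∀ k ≤ N + 1, ∀ x : H, 0 ≤ ⟪P k x, x⟫) ∧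
      (∀ k ≤ N, ∃ ε : ℝ, 0 < ε ∧ ∀ u : U,
        ε * ‖u‖ ^ 2 ≤
          ⟪(R k + adjoint (B k) ∘L P (k+1) ∘L B k
              + adjoint (D k) ∘L P (k+1) ∘L D k) u, u⟫) ∧
      (∀ k ≤ N,
        (R k + adjoint (B k) ∘L P (k+1) ∘L B k + adjoint (D k) ∘L P (k+1) ∘L D k)
            ∘L Rinv k = ContinuousLinearMap.id ℝ U ∧
        Rinv k ∘L
          (R k + adjoint (B k) ∘L P (k+1) ∘L B k + adjoint (D k) ∘L P (k+1) ∘L D k)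
            = ContinuousLinearMap.id ℝ U) ∧
      (∀ k ≤ N,
        P k = adjoint (A k) ∘L P (k+1) ∘L A k + adjoint (C k) ∘L P (k+1) ∘L C k + M k
          - (adjoint (L k) + adjoint (A k) ∘L P (k+1) ∘L B k
              + adjoint (C k) ∘L P (k+1) ∘L D k) ∘L Rinv k
            ∘L (L k + adjoint (B k) ∘L P (k+1) ∘L A k
              + adjoint (D k) ∘L P (k+1) ∘L C k)) := by
  have main : ∀ j : ℕ, ∃ (P : ℕ → H →L[ℝ] H) (Rinv : ℕ → U →L[ℝ] U),
      (∀ k, N + 1 - j ≤ k → k ≤ N + 1 → IsSelfAdjoint (P k)) ∧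
      P (N + 1) = S ∧
      (∀ k, N + 1 - j ≤ k → k ≤ N + 1 → ∀ x : H, 0 ≤ ⟪P k x, x⟫) ∧
      (∀ k, N + 1 - j ≤ k → k ≤ N → ∃ ε : ℝ, 0 < ε ∧ ∀ u : U,
        ε * ‖u‖ ^ 2 ≤
          ⟪(R k + adjoint (B k) ∘L P (k+1) ∘L B k
              + adjoint (D k) ∘L P (k+1) ∘L D k) u, u⟫) ∧
      (∀ k, N + 1 - j ≤ k → k ≤ N →
        (R k + adjoint (B k) ∘L P (k+1) ∘L B k + adjoint (D k) ∘L P (k+1) ∘L D k)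
            ∘L Rinv k = ContinuousLinearMap.id ℝ U ∧
        Rinv k ∘L
          (R k + adjoint (B k) ∘L P (k+1) ∘L B k + adjoint (D k) ∘L P (k+1) ∘L D k)
            = ContinuousLinearMap.id ℝ U) ∧
      (∀ k, N + 1 - j ≤ k → k ≤ N →
        P k = adjoint (A k) ∘L P (k+1) ∘L A k + adjoint (C k) ∘L P (k+1) ∘L C k + M k
          - (adjoint (L k) + adjoint (A k) ∘L P (k+1) ∘L B k
              + adjoint (C k) ∘L P (k+1) ∘L D k) ∘L Rinv k
            ∘L (L k + adjoint (B k) ∘L P (k+1) ∘L A k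
              + adjoint (D k) ∘L P (k+1) ∘L C k)) := by
    intro j
    induction j with
    | zero =>
      refine ⟨fun _ => S, fun _ => 0, ?_, rfl, ?_, ?_, ?_, ?_⟩
      · intro k hk1 hk2; exact hSsa
      · intro k hk1 hk2 x; exact hS x
      · intro k hk1 hk2; omega
      · intro k hk1 hk2; omega
      · intro k hk1 hk2; omega
    | succ j ih =>
      by_cases hj : N + 1 ≤ j
      · simpa only [show N + 1 - (j + 1) = N + 1 - j from by omega] using ih
      · obtain ⟨P, Rinv, hsa, hPN, hpos, hcoer, hinv, hric⟩ := ih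
        set n := N - j with hn
        have hnN : n ≤ N := by omega
        have hXsa : IsSelfAdjoint (P (n + 1)) := hsa (n + 1) (by omega) (by omega)
        have hXpos : ∀ x : H, 0 ≤ ⟪P (n + 1) x, x⟫ := hpos (n + 1) (by omega) (by omega)
        obtain ⟨ϑ, hϑ, hRn⟩ := hRpos n hnN
        obtain ⟨Rn, hc, h1, h2, hsaNew, hposNew⟩ :=
          riccati_step (A n) (C n) (B n) (D n) (M n) (hM n) (L n) (R n) (hRsa n)
            ϑ hϑ hRn (hΨ n hnN) (P (n + 1)) hXsa hXpos
        set newP : H →L[ℝ] H :=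
          adjoint (A n) ∘L P (n+1) ∘L A n + adjoint (C n) ∘L P (n+1) ∘L C n + M n
            - (adjoint (L n) + adjoint (A n) ∘L P (n+1) ∘L B n
                + adjoint (C n) ∘L P (n+1) ∘L D n) ∘L Rn
              ∘L (L n + adjoint (B n) ∘L P (n+1) ∘L A n
                + adjoint (D n) ∘L P (n+1) ∘L C n) with hnewP
        refine ⟨Function.update P n newP, Function.update Rinv n Rn, ?_, ?_, ?_, ?_, ?_, ?_⟩
        · intro k hk1 hk2
          by_cases hkn : k = n
          · subst hkn; rw [Function.update_self]; exact hsaNew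
          · rw [Function.update_of_ne hkn]; exact hsa k (by omega) hk2
        · rw [Function.update_of_ne (by omega : N + 1 ≠ n)]; exact hPN
        · intro k hk1 hk2 x
          by_cases hkn : k = n
          · subst hkn; rw [Function.update_self]; exact hposNew x
          · rw [Function.update_of_ne hkn]; exact hpos k (by omega) hk2 x
        · intro k hk1 hk2
          by_cases hkn : k = n
          · subst hkn
            rw [Function.update_of_ne (by omega : n + 1 ≠ n)]
            exact ⟨ϑ, hϑ, hc⟩
          · rw [Function.update_of_ne (by omega : k + 1 ≠ n)]
            exact hcoer k (by omega) hk2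
        · intro k hk1 hk2
          by_cases hkn : k = n
          · subst hkn
            rw [Function.update_of_ne (by omega : n + 1 ≠ n), Function.update_self]
            exact ⟨h1, h2⟩
          · rw [Function.update_of_ne (by omega : k + 1 ≠ n),
              Function.update_of_ne hkn]
            exact hinv k (by omega) hk2
        · intro k hk1 hk2
          by_cases hkn : k = n
          · subst hkn
            rw [Function.update_of_ne (by omega : n + 1 ≠ n), Function.update_self,
              Function.update_self]
          · rw [Function.update_of_ne (by omega : k + 1 ≠ n),
              Function.update_of_ne hkn, Function.update_of_ne hkn]
            exact hric k (by omega) hk2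
  obtain ⟨P, Rinv, hsa, hPN, hpos, hcoer, hinv, hric⟩ := main (N + 1)
  exact ⟨P, Rinv, fun k hk => hsa k (by omega) hk, hPN,
    fun k hk => hpos k (by omega) hk, fun k hk => hcoer k (by omega) hk,
    fun k hk => hinv k (by omega) hk, fun k hk => hric k (by omega) hk⟩
end

section
/- (Proposition 3) Fix γ > 0. For the disturbed system with x₀ = 0 and output z(k) = C̄(k)x(k) + D̄(k)v(k) satisfying D̄(k)*C̄(k) = 0, if the perturbation operator satisfies ‖𝕃‖ < γ, then for every k ∈ {0,…,N} the operator γ²I_V − D̄(k)*D̄(k) is positive (bounded below by a positive multiple of the identity). -/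
open scoped RealInnerProductSpace
open ContinuousLinearMap MeasureTheory

set_option maxHeartbeats 1600000

section helpers
open ProbabilityTheory
variable {Ω : Type*} [MeasurableSpace Ω] {μ : MeasureTheory.Measure Ω}

lemma myMemL2_sq_integrable {E : Type*} [NormedAddCommGroup E] {f : Ω → E}
    (hf : MemLp f 2 μ) : Integrable (fun a => ‖f a‖ ^ 2) μ :=
  (memLp_two_iff_integrable_sq_norm hf.aestronglyMeasurable).mp hf

lemma myInt_sq_add_le {E : Type*} [NormedAddCommGroup E] {f g : Ω → E}
    (hf : Integrable (fun a => ‖f a‖ ^ 2) μ) (hg : Integrable (fun a => ‖g a‖ ^ 2) μ) :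
    ∫ a, ‖f a + g a‖ ^ 2 ∂μ ≤ 2 * ∫ a, ‖f a‖ ^ 2 ∂μ + 2 * ∫ a, ‖g a‖ ^ 2 ∂μ := by
  have h := integral_mono_of_nonneg (μ := μ)
    (f := fun a => ‖f a + g a‖ ^ 2) (g := fun a => 2 * ‖f a‖ ^ 2 + 2 * ‖g a‖ ^ 2)
    (ae_of_all μ fun a => by positivity)
    ((hf.const_mul 2).add (hg.const_mul 2))
    (ae_of_all μ fun a => by show ‖f a + g a‖ ^ 2 ≤ 2 * ‖f a‖ ^ 2 + 2 * ‖g a‖ ^ 2; nlinarith [mul_self_le_mul_self (norm_nonneg (f a + g a)) (norm_add_le (f a) (g a)), sq_nonneg (‖f a‖ - ‖g a‖), sq_nonneg (‖f a‖ + ‖g a‖)])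
  calc ∫ a, ‖f a + g a‖ ^ 2 ∂μ ≤ ∫ a, (2 * ‖f a‖ ^ 2 + 2 * ‖g a‖ ^ 2) ∂μ := h
    _ = 2 * ∫ a, ‖f a‖ ^ 2 ∂μ + 2 * ∫ a, ‖g a‖ ^ 2 ∂μ := by
        rw [integral_add (hf.const_mul 2) (hg.const_mul 2), integral_const_mul, integral_const_mul]

lemma myInt_sq_clm_le {E F' : Type*} [NormedAddCommGroup E] [NormedSpace ℝ E]
    [NormedAddCommGroup F'] [NormedSpace ℝ F'] (T : E →L[ℝ] F') {f : Ω → E}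
    (hf : Integrable (fun a => ‖f a‖ ^ 2) μ) :
    ∫ a, ‖T (f a)‖ ^ 2 ∂μ ≤ ‖T‖ ^ 2 * ∫ a, ‖f a‖ ^ 2 ∂μ := by
  calc ∫ a, ‖T (f a)‖ ^ 2 ∂μ ≤ ∫ a, ‖T‖ ^ 2 * ‖f a‖ ^ 2 ∂μ :=
        integral_mono_of_nonneg (ae_of_all μ fun a => by positivity) (hf.const_mul _)
          (ae_of_all μ fun a => by
            show ‖T (f a)‖ ^ 2 ≤ ‖T‖ ^ 2 * ‖f a‖ ^ 2
            nlinarith [mul_self_le_mul_self (norm_nonneg (T (f a))) (T.le_opNorm (f a)), norm_nonneg (f a), T.opNorm_nonneg])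
    _ = ‖T‖ ^ 2 * ∫ a, ‖f a‖ ^ 2 ∂μ := integral_const_mul _ _

lemma myIndepFun_of_indep {m1 m2 : MeasurableSpace Ω} {β γ : Type*}
    [MeasurableSpace β] [MeasurableSpace γ] {f : Ω → β} {g : Ω → γ}
    (h : Indep m1 m2 μ) (hf : Measurable[m1] f) (hg : Measurable[m2] g) :
    IndepFun f g μ := by
  rw [IndepFun_iff]
  intro t1 t2 h1 h2
  exact (Indep_iff _ _ _).mp h t1 t2 (measurable_iff_comap_le.mp hf t1 h1)
    (measurable_iff_comap_le.mp hg t2 h2)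

end helpers

/-- Proposition 3: if the perturbation operator of the disturbed system with `x₀ = 0`
satisfies `‖𝕃‖ < γ` (with `‖𝕃‖` expressed as the supremum of the output/input energy
ratios over nonzero admissible disturbances), then for every `k ∈ {0,…,N}` the operator
`γ²I_V − D̄(k)*D̄(k)` is positive, i.e. bounded below by a positive multiple of the
identity. -/
theorem stmt_12 {H V Z : Type*}
    [NormedAddCommGroup H] [InnerProductSpace ℝ H] [CompleteSpace H]
    [NormedAddCommGroup V] [InnerProductSpace ℝ V] [CompleteSpace V]
    [NormedAddCommGroup Z] [InnerProductSpace ℝ Z] [CompleteSpace Z]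
    {Ω : Type*} [MeasurableSpace Ω] (μ : Measure Ω) [IsProbabilityMeasure μ]
    (N : ℕ) (γ : ℝ) (hγ : 0 < γ)
    (A C : ℕ → H →L[ℝ] H) (B₁ D₁ : ℕ → V →L[ℝ] H)
    (Cb : ℕ → H →L[ℝ] Z) (Db : ℕ → V →L[ℝ] Z)
    (hDC : ∀ k ≤ N, adjoint (Db k) ∘L Cb k = 0)
    (ω : ℕ → Ω → ℝ) (hωmeas : ∀ k, Measurable (ω k)) (hωL2 : ∀ k, MemLp (ω k) 2 μ)
    (hmean : ∀ k, ∫ a, ω k a ∂μ = 0) (hvar : ∀ k, ∫ a, (ω k a) ^ 2 ∂μ = 1)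
    (F : ℕ → MeasurableSpace Ω)
    (hF : ∀ k, F k = ⨆ i ∈ Finset.range k, MeasurableSpace.comap (ω i) inferInstance)
    (hindep : ∀ k, ProbabilityTheory.Indep
      (MeasurableSpace.comap (ω k) inferInstance) (F k) μ)
    (hL : sSup {r : ℝ | ∃ (v : ℕ → Ω → V) (x : ℕ → Ω → H),
        (∀ k, StronglyMeasurable[F k] (v k)) ∧ (∀ k, MemLp (v k) 2 μ) ∧
        (x 0 = fun _ => (0 : H)) ∧
        (∀ k ≤ N, ∀ a : Ω, x (k + 1) a =
          A k (x k a) + B₁ k (v k a) + ω k a • (C k (x k a) + D₁ k (v k a))) ∧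
        (∃ k₀ ≤ N, ¬ (v k₀ =ᵐ[μ] fun _ => (0 : V))) ∧
        r = Real.sqrt (∑ k ∈ Finset.range (N + 1),
              ∫ a, ‖Cb k (x k a) + Db k (v k a)‖ ^ 2 ∂μ) /
            Real.sqrt (∑ k ∈ Finset.range (N + 1), ∫ a, ‖v k a‖ ^ 2 ∂μ)} < γ) :
    ∀ k ≤ N, ∃ ϑ : ℝ, 0 < ϑ ∧ ∀ v : V,
      ϑ * ‖v‖ ^ 2 ≤ ⟪((γ ^ 2 : ℝ) • ContinuousLinearMap.id ℝ V
          - adjoint (Db k) ∘L Db k) v, v⟫ := by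
  classical
  intro k hk
  suffices hDb : ‖Db k‖ < γ by
    refine ⟨γ ^ 2 - ‖Db k‖ ^ 2, by nlinarith [norm_nonneg (Db k)], fun v => ?_⟩
    have h1 : ⟪((γ ^ 2 : ℝ) • ContinuousLinearMap.id ℝ V - adjoint (Db k) ∘L Db k) v, v⟫
        = γ ^ 2 * ‖v‖ ^ 2 - ‖Db k v‖ ^ 2 := by
      rw [ContinuousLinearMap.sub_apply, inner_sub_left, ContinuousLinearMap.smul_apply,
        ContinuousLinearMap.id_apply, real_inner_smul_left, ContinuousLinearMap.comp_apply,
        ContinuousLinearMap.adjoint_inner_left, real_inner_self_eq_norm_sq,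
        real_inner_self_eq_norm_sq]
    rw [h1]
    nlinarith [mul_self_le_mul_self (norm_nonneg (Db k v)) ((Db k).le_opNorm v),
      sq_nonneg ‖v‖, norm_nonneg v, norm_nonneg (Db k)]
  by_contra hcon
  push_neg at hcon
  -- basic facts about the filtration
  have hFle : ∀ j, F j ≤ (inferInstance : MeasurableSpace Ω) := by
    intro j; rw [hF j]
    exact iSup₂_le fun i _ => measurable_iff_comap_le.mp (hωmeas i)
  have hFmono : ∀ j, F j ≤ F (j + 1) := by
    intro j; rw [hF j, hF (j + 1)]
    exact biSup_mono fun i hi =>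
      Finset.mem_range.mpr (Nat.lt_succ_of_lt (Finset.mem_range.mp hi))
  have hcomaple : ∀ j, MeasurableSpace.comap (ω j) inferInstance ≤ F (j + 1) := by
    intro j; rw [hF (j + 1)]
    exact le_biSup (fun i => MeasurableSpace.comap (ω i) inferInstance) (Finset.self_mem_range_succ j)
  -- the uniform constants
  set cc : ℕ → ℝ := fun n => Nat.rec 0
    (fun j cj => 4 * (‖A j‖ ^ 2 + ‖C j‖ ^ 2) * cj + 4 * (‖B₁ j‖ ^ 2 + ‖D₁ j‖ ^ 2)) n with hcc
  have hcc0 : ∀ j, 0 ≤ cc j := by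
    intro j
    induction j with
    | zero => exact le_refl 0
    | succ j ih =>
      have hs : cc (j + 1) = 4 * (‖A j‖ ^ 2 + ‖C j‖ ^ 2) * cc j
          + 4 * (‖B₁ j‖ ^ 2 + ‖D₁ j‖ ^ 2) := rfl
      rw [hs]; positivity
  -- the set of ratios is bounded above
  have hBdd : BddAbove {r : ℝ | ∃ (v : ℕ → Ω → V) (x : ℕ → Ω → H),
      (∀ k, StronglyMeasurable[F k] (v k)) ∧ (∀ k, MemLp (v k) 2 μ) ∧
      (x 0 = fun _ => (0 : H)) ∧
      (∀ k ≤ N, ∀ a : Ω, x (k + 1) a =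
        A k (x k a) + B₁ k (v k a) + ω k a • (C k (x k a) + D₁ k (v k a))) ∧
      (∃ k₀ ≤ N, ¬ (v k₀ =ᵐ[μ] fun _ => (0 : V))) ∧
      r = Real.sqrt (∑ k ∈ Finset.range (N + 1),
            ∫ a, ‖Cb k (x k a) + Db k (v k a)‖ ^ 2 ∂μ) /
          Real.sqrt (∑ k ∈ Finset.range (N + 1), ∫ a, ‖v k a‖ ^ 2 ∂μ)} := by
    refine ⟨Real.sqrt (∑ i ∈ Finset.range (N + 1),
      (2 * ‖Cb i‖ ^ 2 * cc i + 2 * ‖Db i‖ ^ 2)), ?_⟩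
    rintro r ⟨v, x, hvm, hvL2, hx0, hrec, ⟨k₀, hk₀, hk₀ne⟩, hr⟩
    set Sin := ∑ j ∈ Finset.range (N + 1), ∫ a, ‖v j a‖ ^ 2 ∂μ with hSin
    have htermnn : ∀ j ∈ Finset.range (N + 1), 0 ≤ ∫ a, ‖v j a‖ ^ 2 ∂μ :=
      fun j _ => integral_nonneg fun a => by positivity
    have hterm_le : ∀ j, j ≤ N → ∫ a, ‖v j a‖ ^ 2 ∂μ ≤ Sin := fun j hj =>
      Finset.single_le_sum htermnn (Finset.mem_range.mpr (Nat.lt_succ_of_le hj))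
    have hSin0 : 0 ≤ Sin := Finset.sum_nonneg htermnn
    have hSinpos : 0 < Sin := by
      have hIk : Integrable (fun a => ‖v k₀ a‖ ^ 2) μ := myMemL2_sq_integrable (hvL2 k₀)
      have h0 : 0 < ∫ a, ‖v k₀ a‖ ^ 2 ∂μ := by
        rcases lt_or_eq_of_le (integral_nonneg (fun a => by positivity) :
            0 ≤ ∫ a, ‖v k₀ a‖ ^ 2 ∂μ) with h | h
        · exact h
        · exfalso
          apply hk₀ne
          have hz := (integral_eq_zero_iff_of_nonneg (fun a => by positivity) hIk).mp h.symm
          filter_upwards [hz] with a ha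
          have : ‖v k₀ a‖ ^ 2 = 0 := ha
          have : ‖v k₀ a‖ = 0 := by nlinarith [norm_nonneg (v k₀ a)]
          simpa using this
      exact lt_of_lt_of_le h0 (hterm_le k₀ hk₀)
    -- the key induction: state bounds
    have key : ∀ j, j ≤ N → StronglyMeasurable[F j] (x j) ∧ MemLp (x j) 2 μ ∧
        ∫ a, ‖x j a‖ ^ 2 ∂μ ≤ cc j * Sin := by
      intro j
      induction j with
      | zero =>
        intro _
        refine ⟨hx0 ▸ stronglyMeasurable_const, hx0 ▸ memLp_const 0, ?_⟩
        rw [hx0]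
        have hcz : cc 0 = 0 := rfl
        simp [hcz]
      | succ j ih =>
        intro hj1
        have hj : j ≤ N := Nat.le_of_succ_le hj1
        obtain ⟨hxm, hxL2, hxint⟩ := ih hj
        set u : Ω → H := fun a => A j (x j a) + B₁ j (v j a) with hu
        set w : Ω → H := fun a => C j (x j a) + D₁ j (v j a) with hw
        have hxeq : x (j + 1) = fun a => u a + ω j a • w a := funext fun a => hrec j hj a
        -- measurability
        have hFj := hFmono j
        have hωm' : Measurable[F (j + 1)] (ω j) :=
          Measurable.of_comap_le (hcomaple j)
        have hum : StronglyMeasurable[F j] u :=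
          ((A j).continuous.comp_stronglyMeasurable hxm).add
            ((B₁ j).continuous.comp_stronglyMeasurable (hvm j))
        have hwm : StronglyMeasurable[F j] w :=
          ((C j).continuous.comp_stronglyMeasurable hxm).add
            ((D₁ j).continuous.comp_stronglyMeasurable (hvm j))
        have hxm' : StronglyMeasurable[F (j + 1)] (x (j + 1)) := by
          rw [hxeq]
          exact (hum.mono hFj).add ((hωm'.stronglyMeasurable).smul (hwm.mono hFj))
        -- L² facts
        have huL2 : MemLp u 2 μ :=
          ((A j).comp_memLp' hxL2).add ((B₁ j).comp_memLp' (hvL2 j))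
        have hwL2 : MemLp w 2 μ :=
          ((C j).comp_memLp' hxL2).add ((D₁ j).comp_memLp' (hvL2 j))
        have hIu : Integrable (fun a => ‖u a‖ ^ 2) μ := myMemL2_sq_integrable huL2
        have hIw : Integrable (fun a => ‖w a‖ ^ 2) μ := myMemL2_sq_integrable hwL2
        have hIω : Integrable (fun a => (ω j a) ^ 2) μ := (hωL2 j).integrable_sq
        -- independence
        have hindf : ProbabilityTheory.IndepFun
            (fun a => (ω j a) ^ 2) (fun a => ‖w a‖ ^ 2) μ := by
          refine myIndepFun_of_indep (hindep j) ?_ ?_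
          · exact (Measurable.of_comap_le le_rfl).pow_const 2
          · exact (hwm.norm.measurable).pow_const 2
        have hprodint : Integrable (fun a => (ω j a) ^ 2 * ‖w a‖ ^ 2) μ := by
          have h := hindf.integrable_mul hIω hIw
          exact h
        have hprodeq : ∫ a, (ω j a) ^ 2 * ‖w a‖ ^ 2 ∂μ = ∫ a, ‖w a‖ ^ 2 ∂μ := by
          have h := ProbabilityTheory.IndepFun.integral_mul_eq_mul_integral hindf hIω.aestronglyMeasurable hIw.aestronglyMeasurable
          simp only [Pi.mul_apply] at h
          rw [hvar j, one_mul] at h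
          exact h
        have heqf : (fun a => ‖ω j a • w a‖ ^ 2) = fun a => (ω j a) ^ 2 * ‖w a‖ ^ 2 := by
          funext a
          rw [norm_smul, mul_pow, Real.norm_eq_abs, sq_abs]
        have hsmulL2 : MemLp (fun a => ω j a • w a) 2 μ := by
          refine (memLp_two_iff_integrable_sq_norm ?_).mpr ?_
          · exact (hωmeas j).aestronglyMeasurable.smul hwL2.aestronglyMeasurable
          · rw [heqf]; exact hprodint
        have hIsm : Integrable (fun a => ‖ω j a • w a‖ ^ 2) μ := myMemL2_sq_integrable hsmulL2
        have hL2next : MemLp (x (j + 1)) 2 μ := by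
          rw [hxeq]; exact huL2.add hsmulL2
        refine ⟨hxm', hL2next, ?_⟩
        -- the integral bound
        have hb1 : ∫ a, ‖x (j + 1) a‖ ^ 2 ∂μ
            ≤ 2 * ∫ a, ‖u a‖ ^ 2 ∂μ + 2 * ∫ a, ‖ω j a • w a‖ ^ 2 ∂μ := by
          rw [hxeq]; exact myInt_sq_add_le hIu hIsm
        have hb2 : ∫ a, ‖ω j a • w a‖ ^ 2 ∂μ = ∫ a, ‖w a‖ ^ 2 ∂μ := by
          rw [heqf]; exact hprodeq
        have hIx : Integrable (fun a => ‖x j a‖ ^ 2) μ := myMemL2_sq_integrable hxL2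
        have hIv : Integrable (fun a => ‖v j a‖ ^ 2) μ := myMemL2_sq_integrable (hvL2 j)
        have hbu : ∫ a, ‖u a‖ ^ 2 ∂μ ≤ 2 * (‖A j‖ ^ 2 * ∫ a, ‖x j a‖ ^ 2 ∂μ)
            + 2 * (‖B₁ j‖ ^ 2 * ∫ a, ‖v j a‖ ^ 2 ∂μ) := by
          have h1 := myInt_sq_add_le (μ := μ)
            (myMemL2_sq_integrable ((A j).comp_memLp' hxL2))
            (myMemL2_sq_integrable ((B₁ j).comp_memLp' (hvL2 j)))
          have h2 := myInt_sq_clm_le (A j) hIx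
          have h3 := myInt_sq_clm_le (B₁ j) hIv
          simp only [hu]
          simp only [Function.comp] at h1
          linarith
        have hbw : ∫ a, ‖w a‖ ^ 2 ∂μ ≤ 2 * (‖C j‖ ^ 2 * ∫ a, ‖x j a‖ ^ 2 ∂μ)
            + 2 * (‖D₁ j‖ ^ 2 * ∫ a, ‖v j a‖ ^ 2 ∂μ) := by
          have h1 := myInt_sq_add_le (μ := μ)
            (myMemL2_sq_integrable ((C j).comp_memLp' hxL2))
            (myMemL2_sq_integrable ((D₁ j).comp_memLp' (hvL2 j)))
          have h2 := myInt_sq_clm_le (C j) hIx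
          have h3 := myInt_sq_clm_le (D₁ j) hIv
          simp only [hw]
          simp only [Function.comp] at h1
          linarith
        have hccs : cc (j + 1) = 4 * (‖A j‖ ^ 2 + ‖C j‖ ^ 2) * cc j
            + 4 * (‖B₁ j‖ ^ 2 + ‖D₁ j‖ ^ 2) := rfl
        have hvle := hterm_le j hj
        have hx0' : 0 ≤ ∫ a, ‖x j a‖ ^ 2 ∂μ := integral_nonneg fun a => by positivity
        have hv0' : 0 ≤ ∫ a, ‖v j a‖ ^ 2 ∂μ := integral_nonneg fun a => by positivity
        rw [hccs]
        have hm1 := mul_le_mul_of_nonneg_left hxint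
          (by positivity : (0:ℝ) ≤ 4 * (‖A j‖ ^ 2 + ‖C j‖ ^ 2))
        have hm2 := mul_le_mul_of_nonneg_left hvle
          (by positivity : (0:ℝ) ≤ 4 * (‖B₁ j‖ ^ 2 + ‖D₁ j‖ ^ 2))
        linarith
    -- bound each output term
    have hout : ∀ i ∈ Finset.range (N + 1), ∫ a, ‖Cb i (x i a) + Db i (v i a)‖ ^ 2 ∂μ
        ≤ (2 * ‖Cb i‖ ^ 2 * cc i + 2 * ‖Db i‖ ^ 2) * Sin := by
      intro i hi
      have hiN : i ≤ N := Nat.lt_succ_iff.mp (Finset.mem_range.mp hi)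
      obtain ⟨_, hxL2, hxint⟩ := key i hiN
      have hIx : Integrable (fun a => ‖x i a‖ ^ 2) μ := myMemL2_sq_integrable hxL2
      have hIv : Integrable (fun a => ‖v i a‖ ^ 2) μ := myMemL2_sq_integrable (hvL2 i)
      have h1 := myInt_sq_add_le (μ := μ)
        (myMemL2_sq_integrable ((Cb i).comp_memLp' hxL2))
        (myMemL2_sq_integrable ((Db i).comp_memLp' (hvL2 i)))
      simp only [Function.comp] at h1
      have h2 := myInt_sq_clm_le (Cb i) hIx
      have h3 := myInt_sq_clm_le (Db i) hIv
      have h4 := hterm_le i hiN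
      have h5 : 0 ≤ ∫ a, ‖x i a‖ ^ 2 ∂μ := integral_nonneg fun a => by positivity
      have h6 : 0 ≤ ∫ a, ‖v i a‖ ^ 2 ∂μ := integral_nonneg fun a => by positivity
      have hm1 := mul_le_mul_of_nonneg_left hxint
        (by positivity : (0:ℝ) ≤ 2 * ‖Cb i‖ ^ 2)
      have hm2 := mul_le_mul_of_nonneg_left h4
        (by positivity : (0:ℝ) ≤ 2 * ‖Db i‖ ^ 2)
      linarith
    have hSout_le : (∑ i ∈ Finset.range (N + 1), ∫ a, ‖Cb i (x i a) + Db i (v i a)‖ ^ 2 ∂μ)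
        ≤ (∑ i ∈ Finset.range (N + 1), (2 * ‖Cb i‖ ^ 2 * cc i + 2 * ‖Db i‖ ^ 2)) * Sin := by
      rw [Finset.sum_mul]
      exact Finset.sum_le_sum hout
    have hD0 : 0 ≤ ∑ i ∈ Finset.range (N + 1), (2 * ‖Cb i‖ ^ 2 * cc i + 2 * ‖Db i‖ ^ 2) :=
      Finset.sum_nonneg fun i _ => by have := hcc0 i; positivity
    rw [hr, div_le_iff₀ (Real.sqrt_pos.mpr hSinpos), ← Real.sqrt_mul hD0]
    exact Real.sqrt_le_sqrt hSout_le
  -- now derive a contradiction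
  set c : ℝ := max (sSup {r : ℝ | ∃ (v : ℕ → Ω → V) (x : ℕ → Ω → H),
      (∀ k, StronglyMeasurable[F k] (v k)) ∧ (∀ k, MemLp (v k) 2 μ) ∧
      (x 0 = fun _ => (0 : H)) ∧
      (∀ k ≤ N, ∀ a : Ω, x (k + 1) a =
        A k (x k a) + B₁ k (v k a) + ω k a • (C k (x k a) + D₁ k (v k a))) ∧
      (∃ k₀ ≤ N, ¬ (v k₀ =ᵐ[μ] fun _ => (0 : V))) ∧
      r = Real.sqrt (∑ k ∈ Finset.range (N + 1),
            ∫ a, ‖Cb k (x k a) + Db k (v k a)‖ ^ 2 ∂μ) /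
          Real.sqrt (∑ k ∈ Finset.range (N + 1), ∫ a, ‖v k a‖ ^ 2 ∂μ)}) 0 with hc
  have hcγ : c < γ := max_lt hL hγ
  have hlt : c < ‖Db k‖ := lt_of_lt_of_le hcγ hcon
  have hex : ¬ ∀ v : V, ‖Db k v‖ ≤ c * ‖v‖ := by
    intro hall
    exact absurd ((Db k).opNorm_le_bound (le_max_right _ _) hall) (not_le.mpr hlt)
  push_neg at hex
  obtain ⟨v, hv⟩ := hex
  have hvne : v ≠ 0 := by
    rintro rfl
    simp at hv
  have hvnorm : 0 < ‖v‖ := norm_pos_iff.mpr hvne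
  -- construct the disturbance
  set vv : ℕ → Ω → V := fun j => if j = k then (fun _ => v) else (fun _ => 0) with hvv
  set xx : ℕ → Ω → H := fun n => Nat.rec (fun _ => (0 : H))
      (fun j xj a => A j (xj a) + B₁ j (vv j a) + ω j a • (C j (xj a) + D₁ j (vv j a))) n
      with hxxdef
  have hxx0 : ∀ j, j ≤ k → xx j = fun _ => (0 : H) := by
    intro j
    induction j with
    | zero => intro _; rfl
    | succ i ih =>
      intro hj
      have hik : i < k := hj
      have hvi : vv i = fun _ => (0 : V) := by
        simp [hvv, Nat.ne_of_lt hik]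
      have hxi := ih (le_of_lt hik)
      funext a
      show A i (xx i a) + B₁ i (vv i a) + ω i a • (C i (xx i a) + D₁ i (vv i a)) = 0
      rw [hxi, hvi]
      simp
  have hvvk : vv k = fun _ => v := by simp [hvv]
  have hSinv : (∑ j ∈ Finset.range (N + 1), ∫ a, ‖vv j a‖ ^ 2 ∂μ) = ‖v‖ ^ 2 := by
    rw [Finset.sum_eq_single_of_mem k (Finset.mem_range.mpr (Nat.lt_succ_of_le hk))]
    · rw [hvvk]; simp
    · intro j _ hj
      have : vv j = fun _ => (0 : V) := by simp [hvv, hj]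
      rw [this]; simp
  have hSoutk : ∫ a, ‖Cb k (xx k a) + Db k (vv k a)‖ ^ 2 ∂μ = ‖Db k v‖ ^ 2 := by
    rw [hxx0 k le_rfl, hvvk]
    simp
  have hSout_ge : ‖Db k v‖ ^ 2
      ≤ ∑ i ∈ Finset.range (N + 1), ∫ a, ‖Cb i (xx i a) + Db i (vv i a)‖ ^ 2 ∂μ := by
    rw [← hSoutk]
    exact Finset.single_le_sum
      (f := fun i => ∫ a, ‖Cb i (xx i a) + Db i (vv i a)‖ ^ 2 ∂μ)
      (fun i _ => integral_nonneg fun a => by positivity)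
      (Finset.mem_range.mpr (Nat.lt_succ_of_le hk))
  have hmem : (Real.sqrt (∑ i ∈ Finset.range (N + 1),
        ∫ a, ‖Cb i (xx i a) + Db i (vv i a)‖ ^ 2 ∂μ) /
      Real.sqrt (∑ i ∈ Finset.range (N + 1), ∫ a, ‖vv i a‖ ^ 2 ∂μ)) ∈
      {r : ℝ | ∃ (v : ℕ → Ω → V) (x : ℕ → Ω → H),
      (∀ k, StronglyMeasurable[F k] (v k)) ∧ (∀ k, MemLp (v k) 2 μ) ∧
      (x 0 = fun _ => (0 : H)) ∧
      (∀ k ≤ N, ∀ a : Ω, x (k + 1) a =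
        A k (x k a) + B₁ k (v k a) + ω k a • (C k (x k a) + D₁ k (v k a))) ∧
      (∃ k₀ ≤ N, ¬ (v k₀ =ᵐ[μ] fun _ => (0 : V))) ∧
      r = Real.sqrt (∑ k ∈ Finset.range (N + 1),
            ∫ a, ‖Cb k (x k a) + Db k (v k a)‖ ^ 2 ∂μ) /
          Real.sqrt (∑ k ∈ Finset.range (N + 1), ∫ a, ‖v k a‖ ^ 2 ∂μ)} := by
    refine ⟨vv, xx, ?_, ?_, rfl, ?_, ⟨k, hk, ?_⟩, rfl⟩
    · intro j
      simp only [hvv]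
      split <;> exact stronglyMeasurable_const
    · intro j
      simp only [hvv]
      split <;> exact memLp_const _
    · intro j _ a
      rfl
    · rw [hvvk]
      intro h
      haveI : (MeasureTheory.ae μ).NeBot := ae_neBot.mpr (IsProbabilityMeasure.ne_zero μ)
      have : v = 0 := Filter.eventually_const.mp h
      exact hvne this
  have hle := le_csSup hBdd hmem
  have hratio : c < Real.sqrt (∑ i ∈ Finset.range (N + 1),
        ∫ a, ‖Cb i (xx i a) + Db i (vv i a)‖ ^ 2 ∂μ) /
      Real.sqrt (∑ i ∈ Finset.range (N + 1), ∫ a, ‖vv i a‖ ^ 2 ∂μ) := by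
    rw [hSinv, Real.sqrt_sq (norm_nonneg v)]
    rw [lt_div_iff₀ hvnorm]
    calc c * ‖v‖ < ‖Db k v‖ := hv
      _ = Real.sqrt (‖Db k v‖ ^ 2) := (Real.sqrt_sq (norm_nonneg _)).symm
      _ ≤ _ := Real.sqrt_le_sqrt hSout_ge
  have : c < c := lt_of_lt_of_le hratio (le_trans hle (le_max_left _ _))
  exact absurd this (lt_irrefl c)
end

section
/- (Deterministic finite-horizon bounded real lemma, sufficiency, scalar-noise-free version) Consider the deterministic system x(k+1) = A(k)x(k) + B₁(k)v(k), z(k) = C̄(k)x(k) + D̄(k)v(k), x(0) = 0, with D̄(k)*C̄(k) = 0, over k ∈ {0,…,N}. Suppose there exist self-adjoint operators Y(0),…,Y(N+1) on H with Y(N+1) = 0 satisfying Y(k) = A(k)*Y(k+1)A(k) − C̄(k)*C̄(k) − π₂(k)* π₃(k)⁻¹ π₂(k) where π₂(k) = B₁(k)*Y(k+1)A(k) and π₃(k) = γ²I_V − D̄(k)*D̄(k) + B₁(k)*Y(k+1)B₁(k) is positive for each k. Then for every nonzero disturbance sequence v(0),…,v(N) in V, Σ_{k=0}^N ‖z(k)‖²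 < γ² Σ_{k=0}^N ‖v(k)‖². -/
open scoped RealInnerProductSpace
open ContinuousLinearMap

/-- Deterministic finite-horizon bounded real lemma, sufficiency (noise-free version):
for the system `x(k+1) = A(k)x(k) + B₁(k)v(k)`, `z(k) = C̄(k)x(k) + D̄(k)v(k)`, `x(0) = 0`,
with `D̄(k)*C̄(k) = 0`, if self-adjoint `Y(0),…,Y(N+1)` with `Y(N+1) = 0` satisfy the
backward Riccati equation `Y(k) = A(k)*Y(k+1)A(k) − C̄(k)*C̄(k) − π₂(k)*π₃(k)⁻¹π₂(k)`
with `π₂(k) = B₁(k)*Y(k+1)A(k)` and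
`π₃(k) = γ²I − D̄(k)*D̄(k) + B₁(k)*Y(k+1)B₁(k)` positive (with bounded inverse `π₃inv k`),
then every nonzero disturbance satisfies `Σ‖z(k)‖² < γ²Σ‖v(k)‖²`. -/
theorem stmt_16 {H V Z : Type*}
    [NormedAddCommGroup H] [InnerProductSpace ℝ H] [CompleteSpace H]
    [NormedAddCommGroup V] [InnerProductSpace ℝ V] [CompleteSpace V]
    [NormedAddCommGroup Z] [InnerProductSpace ℝ Z] [CompleteSpace Z]
    (N : ℕ) (γ : ℝ) (hγ : 0 < γ)
    (A : ℕ → H →L[ℝ] H) (B₁ : ℕ → V →L[ℝ] H)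
    (Cb : ℕ → H →L[ℝ] Z) (Db : ℕ → V →L[ℝ] Z)
    (hDC : ∀ k ≤ N, adjoint (Db k) ∘L Cb k = 0)
    (Y : ℕ → H →L[ℝ] H) (hYsa : ∀ k ≤ N + 1, IsSelfAdjoint (Y k))
    (hterm : Y (N + 1) = 0)
    (π₃inv : ℕ → V →L[ℝ] V)
    (hπ₃pos : ∀ k ≤ N, ∃ ϑ : ℝ, 0 < ϑ ∧ ∀ v : V,
      ϑ * ‖v‖ ^ 2 ≤
        ⟪((γ ^ 2 : ℝ) • ContinuousLinearMap.id ℝ V - adjoint (Db k) ∘L Db k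
            + adjoint (B₁ k) ∘L Y (k+1) ∘L B₁ k) v, v⟫)
    (hπ₃inv : ∀ k ≤ N,
      ((γ ^ 2 : ℝ) • ContinuousLinearMap.id ℝ V - adjoint (Db k) ∘L Db k
          + adjoint (B₁ k) ∘L Y (k+1) ∘L B₁ k) ∘L π₃inv k = ContinuousLinearMap.id ℝ V ∧
      π₃inv k ∘L ((γ ^ 2 : ℝ) • ContinuousLinearMap.id ℝ V - adjoint (Db k) ∘L Db k
          + adjoint (B₁ k) ∘L Y (k+1) ∘L B₁ k) = ContinuousLinearMap.id ℝ V)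
    (hRic : ∀ k ≤ N,
      Y k = adjoint (A k) ∘L Y (k+1) ∘L A k - adjoint (Cb k) ∘L Cb k
        - adjoint (adjoint (B₁ k) ∘L Y (k+1) ∘L A k) ∘L π₃inv k
            ∘L (adjoint (B₁ k) ∘L Y (k+1) ∘L A k))
    (v : ℕ → V) (x : ℕ → H) (hx0 : x 0 = 0)
    (hxrec : ∀ k ≤ N, x (k + 1) = A k (x k) + B₁ k (v k))
    (hvne : ∃ k ≤ N, v k ≠ 0) :
    ∑ k ∈ Finset.range (N + 1), ‖Cb k (x k) + Db k (v k)‖ ^ 2 <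
      γ ^ 2 * ∑ k ∈ Finset.range (N + 1), ‖v k‖ ^ 2 := by
  classical
  -- abbreviations
  set Pi3 : ℕ → V →L[ℝ] V := fun k =>
    (γ ^ 2 : ℝ) • ContinuousLinearMap.id ℝ V - adjoint (Db k) ∘L Db k
      + adjoint (B₁ k) ∘L Y (k+1) ∘L B₁ k with hPi3
  set Pi2 : ℕ → H →L[ℝ] V := fun k => adjoint (B₁ k) ∘L Y (k+1) ∘L A k with hPi2
  set w : ℕ → V := fun k => v k + π₃inv k (Pi2 k (x k)) with hw
  -- the key step identity
  have key : ∀ k ≤ N, γ ^ 2 * ‖v k‖ ^ 2 - ‖Cb k (x k) + Db k (v k)‖ ^ 2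
      = ⟪Pi3 k (w k), w k⟫
        + (⟪Y k (x k), x k⟫ - ⟪Y (k+1) (x (k+1)), x (k+1)⟫) := by
    intro k hk
    have hsa : ∀ (a b : H), ⟪Y (k+1) a, b⟫ = ⟪a, Y (k+1) b⟫ := by
      intro a b
      have h := (ContinuousLinearMap.isSelfAdjoint_iff'.mp (hYsa (k+1) (by omega)))
      conv_lhs => rw [← h]
      exact ContinuousLinearMap.adjoint_inner_left _ _ _
    set xk := x k
    set vk := v k
    set u := π₃inv k (Pi2 k xk) with hu
    -- expansion of Pi3 applied
    have hPi3app : ∀ a : V, Pi3 k a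
        = (γ ^ 2 : ℝ) • a - adjoint (Db k) (Db k a) + adjoint (B₁ k) (Y (k+1) (B₁ k a)) := by
      intro a; simp [hPi3]
    have hPi3inner : ∀ a b : V, ⟪Pi3 k a, b⟫
        = γ ^ 2 * ⟪a, b⟫ - ⟪Db k a, Db k b⟫ + ⟪Y (k+1) (B₁ k a), B₁ k b⟫ := by
      intro a b
      rw [hPi3app]
      rw [inner_add_left, inner_sub_left, real_inner_smul_left,
        ContinuousLinearMap.adjoint_inner_left, ContinuousLinearMap.adjoint_inner_left]
    -- Pi3 is self-adjoint (as a bilinear form)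
    have hPi3sym : ∀ a b : V, ⟪Pi3 k a, b⟫ = ⟪a, Pi3 k b⟫ := by
      intro a b
      rw [real_inner_comm (Pi3 k b) a, hPi3inner a b, hPi3inner b a]
      rw [real_inner_comm a b, real_inner_comm (Db k a) (Db k b),
        hsa (B₁ k b) (B₁ k a), real_inner_comm (Y (k+1) (B₁ k a)) (B₁ k b)]
    -- Pi3 k u = Pi2 k xk
    have hPi3u : Pi3 k u = Pi2 k xk := by
      have h := (hπ₃inv k hk).1
      have := congrArg (fun T => T (Pi2 k xk)) h
      simpa [hu, hPi3] using this
    -- Pi2 inner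
    have hPi2inner : ∀ b : V, ⟪Pi2 k xk, b⟫ = ⟪Y (k+1) (A k xk), B₁ k b⟫ := by
      intro b
      simp only [hPi2, ContinuousLinearMap.comp_apply]
      rw [ContinuousLinearMap.adjoint_inner_left]
    -- the output norm splits (D*C = 0)
    have hzsplit : ‖Cb k xk + Db k vk‖ ^ 2 = ‖Cb k xk‖ ^ 2 + ‖Db k vk‖ ^ 2 := by
      have hcross : ⟪Cb k xk, Db k vk⟫ = 0 := by
        rw [← ContinuousLinearMap.adjoint_inner_left (Db k) vk (Cb k xk)]
        have h0 : (adjoint (Db k)) ((Cb k) xk) = 0 := by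
          have := congrArg (fun T => T xk) (hDC k hk)
          simpa only [ContinuousLinearMap.comp_apply,
            ContinuousLinearMap.zero_apply] using this
        rw [h0, inner_zero_left]
      rw [norm_add_sq_real, hcross]; ring
    -- Riccati gives the value of ⟪Y k xk, xk⟫
    have hYk : ⟪Y k xk, xk⟫
        = ⟪Y (k+1) (A k xk), A k xk⟫ - ‖Cb k xk‖ ^ 2 - ⟪u, Pi2 k xk⟫ := by
      have h := congrArg (fun T => T xk) (hRic k hk)
      simp only [ContinuousLinearMap.sub_apply, ContinuousLinearMap.comp_apply] at h
      rw [h, inner_sub_left, inner_sub_left, ContinuousLinearMap.adjoint_inner_left,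
        ContinuousLinearMap.adjoint_inner_left, ContinuousLinearMap.adjoint_inner_left,
        real_inner_self_eq_norm_sq]
      rfl
    -- expand ⟪Y' x(k+1), x(k+1)⟫
    have hxs : x (k+1) = A k xk + B₁ k vk := hxrec k hk
    have hYnext : ⟪Y (k+1) (x (k+1)), x (k+1)⟫
        = ⟪Y (k+1) (A k xk), A k xk⟫ + 2 * ⟪Y (k+1) (A k xk), B₁ k vk⟫
          + ⟪Y (k+1) (B₁ k vk), B₁ k vk⟫ := by
      rw [hxs, map_add, inner_add_left, inner_add_right, inner_add_right]
      have : ⟪Y (k+1) (B₁ k vk), A k xk⟫ = ⟪Y (k+1) (A k xk), B₁ k vk⟫ := by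
        rw [hsa, real_inner_comm]
      rw [this]; ring
    -- expand the quadratic form at w
    have hwval : w k = vk + u := rfl
    have hrhs : ⟪Pi3 k (w k), w k⟫
        = (γ ^ 2 * ‖vk‖ ^ 2 - ‖Db k vk‖ ^ 2 + ⟪Y (k+1) (B₁ k vk), B₁ k vk⟫)
          + 2 * ⟪Y (k+1) (A k xk), B₁ k vk⟫ + ⟪u, Pi2 k xk⟫ := by
      rw [hwval, map_add, inner_add_left, inner_add_right, inner_add_right]
      rw [hPi3u]
      have h1 : ⟪Pi3 k vk, vk⟫
          = γ ^ 2 * ‖vk‖ ^ 2 - ‖Db k vk‖ ^ 2 + ⟪Y (k+1) (B₁ k vk), B₁ k vk⟫ := by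
        rw [hPi3inner, real_inner_self_eq_norm_sq, real_inner_self_eq_norm_sq]
      have h2 : ⟪Pi3 k vk, u⟫ = ⟪Y (k+1) (A k xk), B₁ k vk⟫ := by
        rw [hPi3sym vk u, hPi3u, real_inner_comm (Pi2 k xk) vk, hPi2inner]
      have h3 : ⟪Pi2 k xk, vk⟫ = ⟪Y (k+1) (A k xk), B₁ k vk⟫ := hPi2inner vk
      have h4 : ⟪Pi2 k xk, u⟫ = ⟪u, Pi2 k xk⟫ := real_inner_comm _ _
      rw [h1, h2, h3, h4]; ring
    rw [hrhs, hYk, hYnext, hzsplit]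
    ring
  -- sum the key identity over the horizon
  have hsum : γ ^ 2 * ∑ k ∈ Finset.range (N + 1), ‖v k‖ ^ 2
      - ∑ k ∈ Finset.range (N + 1), ‖Cb k (x k) + Db k (v k)‖ ^ 2
      = ∑ k ∈ Finset.range (N + 1), ⟪Pi3 k (w k), w k⟫ := by
    have htel : ∑ k ∈ Finset.range (N + 1),
        (⟪Y k (x k), x k⟫ - ⟪Y (k+1) (x (k+1)), x (k+1)⟫)
        = ⟪Y 0 (x 0), x 0⟫ - ⟪Y (N+1) (x (N+1)), x (N+1)⟫ :=
      Finset.sum_range_sub' (fun k => ⟪Y k (x k), x k⟫) (N + 1)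
    have h0 : ⟪Y 0 (x 0), x 0⟫ = 0 := by rw [hx0]; simp
    have hN : ⟪Y (N+1) (x (N+1)), x (N+1)⟫ = 0 := by rw [hterm]; simp
    calc γ ^ 2 * ∑ k ∈ Finset.range (N + 1), ‖v k‖ ^ 2
        - ∑ k ∈ Finset.range (N + 1), ‖Cb k (x k) + Db k (v k)‖ ^ 2
        = ∑ k ∈ Finset.range (N + 1),
            (γ ^ 2 * ‖v k‖ ^ 2 - ‖Cb k (x k) + Db k (v k)‖ ^ 2) := by
          rw [Finset.sum_sub_distrib, Finset.mul_sum]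
      _ = ∑ k ∈ Finset.range (N + 1), (⟪Pi3 k (w k), w k⟫
            + (⟪Y k (x k), x k⟫ - ⟪Y (k+1) (x (k+1)), x (k+1)⟫)) := by
          refine Finset.sum_congr rfl fun k hkmem => ?_
          exact key k (by simpa [Nat.lt_succ_iff] using Finset.mem_range.mp hkmem)
      _ = ∑ k ∈ Finset.range (N + 1), ⟪Pi3 k (w k), w k⟫
            + (⟪Y 0 (x 0), x 0⟫ - ⟪Y (N+1) (x (N+1)), x (N+1)⟫) := by
          rw [Finset.sum_add_distrib, htel]
      _ = ∑ k ∈ Finset.range (N + 1), ⟪Pi3 k (w k), w k⟫ := by rw [h0, hN]; ring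
  -- positivity of the sum of quadratic terms
  have hnonneg : ∀ k ∈ Finset.range (N + 1), 0 ≤ ⟪Pi3 k (w k), w k⟫ := by
    intro k hkmem
    have hk : k ≤ N := by simpa [Nat.lt_succ_iff] using Finset.mem_range.mp hkmem
    obtain ⟨ϑ, hϑ, hineq⟩ := hπ₃pos k hk
    have hq : ϑ * ‖w k‖ ^ 2 ≤ ⟪Pi3 k (w k), w k⟫ := by
      simpa only [hPi3] using hineq (w k)
    have h0 : (0:ℝ) ≤ ϑ * ‖w k‖ ^ 2 := by positivity
    linarith
  have hexists : ∃ k ∈ Finset.range (N + 1), 0 < ⟪Pi3 k (w k), w k⟫ := by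
    obtain ⟨k₁, hk₁, hvk₁⟩ := hvne
    have hP : ∃ k, v k ≠ 0 := ⟨k₁, hvk₁⟩
    set k₀ := Nat.find hP with hk₀def
    have hk₀spec : v k₀ ≠ 0 := Nat.find_spec hP
    have hk₀le : k₀ ≤ N := le_trans (Nat.find_min' hP hvk₁) hk₁
    -- x vanishes up to k₀
    have hxzero : ∀ j ≤ k₀, x j = 0 := by
      intro j hj
      induction j with
      | zero => exact hx0
      | succ m ih =>
        have hm : m < k₀ := by omega
        have hvm : v m = 0 := by
          by_contra hne
          exact absurd (Nat.find_min' hP hne) (by omega)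
        have hxm : x m = 0 := ih (by omega)
        rw [hxrec m (by omega), hxm, hvm, map_zero, map_zero, add_zero]
    have hwk₀ : w k₀ = v k₀ := by
      simp [hw, hxzero k₀ le_rfl]
    refine ⟨k₀, Finset.mem_range.mpr (by omega), ?_⟩
    obtain ⟨ϑ, hϑ, hineq⟩ := hπ₃pos k₀ hk₀le
    have h1 : ϑ * ‖w k₀‖ ^ 2 ≤ ⟪Pi3 k₀ (w k₀), w k₀⟫ := by
      simpa only [hPi3] using hineq (w k₀)
    have h2 : 0 < ‖w k₀‖ ^ 2 := by
      rw [hwk₀]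
      exact pow_pos (norm_pos_iff.mpr hk₀spec) 2
    have h3 : 0 < ϑ * ‖w k₀‖ ^ 2 := mul_pos hϑ h2
    linarith
  have hpos : 0 < ∑ k ∈ Finset.range (N + 1), ⟪Pi3 k (w k), w k⟫ :=
    Finset.sum_pos' hnonneg hexists
  linarith
end
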